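/- arXiv:1610.08441 — 5 statements merged into one kernel-verified Lean document; each statement's English description precedes it below -/
import Mathlib

section
/- For all real numbers $p \geq 2$ and $\rho > 1$, we have $\int_0^\pi \frac{\sin^{p-2}\xi}{(1+\rho^2-2\rho\cos\xi)^{p/2}}\,d\xi = \frac{1}{\rho^{p-2}(\rho^2-1)}\int_0^\pi \sin^{p-2}\xi\,d\xi$. -/
open Real intervalIntegral

namespace Landkof

open MeasureTheory

noncomputable def Rk (t ξ : ℝ) : ℝ := 1 - 2 * t * Real.cos ξ + t ^ 2

noncomputable def gmap (t ξ : ℝ) : ℝ :=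
  ξ + 2 * Real.arctan (t * Real.sin ξ / (1 - t * Real.cos ξ))

lemma den_pos {t : ℝ} (ht0 : 0 ≤ t) (ht1 : t < 1) (ξ : ℝ) : 0 < 1 - t * Real.cos ξ := by
  nlinarith [Real.cos_le_one ξ, Real.neg_one_le_cos ξ]

lemma Rk_pos {t : ℝ} (ht0 : 0 ≤ t) (ht1 : t < 1) (ξ : ℝ) : 0 < Rk t ξ := by
  have h1 := Real.cos_le_one ξ
  have h2 := Real.neg_one_le_cos ξ
  unfold Rk
  nlinarith

lemma one_sub_sq_pos {t : ℝ} (ht0 : 0 ≤ t) (ht1 : t < 1) : 0 < 1 - t ^ 2 := by nlinarith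

lemma sin2arctan (y : ℝ) : Real.sin (2 * Real.arctan y) = 2 * y / (1 + y ^ 2) := by
  have h : Real.sqrt (1 + y ^ 2) ^ 2 = 1 + y ^ 2 := Real.sq_sqrt (by positivity)
  have hpos : 0 < Real.sqrt (1 + y ^ 2) := Real.sqrt_pos.2 (by positivity)
  rw [Real.sin_two_mul, Real.sin_arctan, Real.cos_arctan]
  field_simp
  rw [h]

lemma cos2arctan (y : ℝ) : Real.cos (2 * Real.arctan y) = (1 - y ^ 2) / (1 + y ^ 2) := by
  have h : Real.sqrt (1 + y ^ 2) ^ 2 = 1 + y ^ 2 := Real.sq_sqrt (by positivity)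
  have hpos : 0 < Real.sqrt (1 + y ^ 2) := Real.sqrt_pos.2 (by positivity)
  rw [Real.cos_two_mul, Real.cos_arctan, div_pow, one_pow, h]
  field_simp
  ring

section pointwise

lemma key_one_add_sq {t : ℝ} (ht0 : 0 ≤ t) (ht1 : t < 1) (ξ : ℝ) :
    1 + (t * Real.sin ξ / (1 - t * Real.cos ξ)) ^ 2
      = Rk t ξ / (1 - t * Real.cos ξ) ^ 2 := by
  have hd := den_pos ht0 ht1 ξ
  have hsc := Real.sin_sq_add_cos_sq ξ
  field_simp
  unfold Rk
  linear_combination t ^ 2 * hsc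

lemma gmap_hasDerivAt {t : ℝ} (ht0 : 0 ≤ t) (ht1 : t < 1) (ξ : ℝ) : HasDerivAt (gmap t) ((1 - t ^ 2) / Rk t ξ) ξ := by
  have hd := den_pos ht0 ht1 ξ
  have hR := Rk_pos ht0 ht1 ξ
  have hsc := Real.sin_sq_add_cos_sq ξ
  have h1 : HasDerivAt (fun ξ => t * Real.sin ξ) (t * Real.cos ξ) ξ :=
    (Real.hasDerivAt_sin ξ).const_mul t
  have h2 : HasDerivAt (fun ξ => 1 - t * Real.cos ξ) (t * Real.sin ξ) ξ := by
    simpa using ((Real.hasDerivAt_cos ξ).const_mul t).const_sub 1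
  have h3 : HasDerivAt (fun ξ => t * Real.sin ξ / (1 - t * Real.cos ξ))
      ((t * Real.cos ξ * (1 - t * Real.cos ξ) - t * Real.sin ξ * (t * Real.sin ξ)) /
        (1 - t * Real.cos ξ) ^ 2) ξ := h1.div h2 hd.ne'
  have h4 := ((Real.hasDerivAt_arctan _).comp ξ h3).const_mul 2
  have h5 := (hasDerivAt_id ξ).add h4
  refine h5.congr_deriv ?_
  symm
  rw [key_one_add_sq ht0 ht1]
  have e1 : t * Real.cos ξ * (1 - t * Real.cos ξ) - t * Real.sin ξ * (t * Real.sin ξ)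
      = t * Real.cos ξ - t ^ 2 := by linear_combination (-(t^2)) * hsc
  rw [e1]
  unfold Rk at *
  rw [one_div]
  field_simp
  have hR' : 1 - t * 2 * Real.cos ξ + t ^ 2 ≠ 0 := by linarith
  field_simp
  ring

lemma aux2theta {t : ℝ} (ht0 : 0 ≤ t) (ht1 : t < 1) (ξ : ℝ) :
    Real.sin (2 * Real.arctan (t * Real.sin ξ / (1 - t * Real.cos ξ)))
      = 2 * t * Real.sin ξ * (1 - t * Real.cos ξ) / Rk t ξ
    ∧ Real.cos (2 * Real.arctan (t * Real.sin ξ / (1 - t * Real.cos ξ)))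
      = ((1 - t * Real.cos ξ) ^ 2 - t ^ 2 * Real.sin ξ ^ 2) / Rk t ξ := by
  have hd := den_pos ht0 ht1 ξ
  have hR := Rk_pos ht0 ht1 ξ
  constructor
  · rw [sin2arctan, key_one_add_sq ht0 ht1]
    field_simp
  · rw [cos2arctan, key_one_add_sq ht0 ht1]
    field_simp

lemma sin_gmap {t : ℝ} (ht0 : 0 ≤ t) (ht1 : t < 1) (ξ : ℝ) :
    Real.sin (gmap t ξ) = (1 - t ^ 2) * Real.sin ξ / Rk t ξ := by
  have hd := den_pos ht0 ht1 ξ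
  have hR := Rk_pos ht0 ht1 ξ
  have hsc := Real.sin_sq_add_cos_sq ξ
  unfold gmap
  rw [Real.sin_add, (aux2theta ht0 ht1 ξ).1, (aux2theta ht0 ht1 ξ).2]
  rw [mul_div_assoc', mul_div_assoc', ← add_div]
  congr 1
  linear_combination (-(t ^ 2) * Real.sin ξ) * hsc

lemma cos_gmap {t : ℝ} (ht0 : 0 ≤ t) (ht1 : t < 1) (ξ : ℝ) :
    Real.cos (gmap t ξ) = ((1 + t ^ 2) * Real.cos ξ - 2 * t) / Rk t ξ := by
  have hd := den_pos ht0 ht1 ξ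
  have hR := Rk_pos ht0 ht1 ξ
  have hsc := Real.sin_sq_add_cos_sq ξ
  unfold gmap
  rw [Real.cos_add, (aux2theta ht0 ht1 ξ).1, (aux2theta ht0 ht1 ξ).2]
  rw [mul_div_assoc', mul_div_assoc', div_sub_div_same]
  congr 1
  linear_combination (t ^ 2 * Real.cos ξ - 2 * t) * hsc


lemma Rk_continuous (t : ℝ) : Continuous (Rk t) := by
  unfold Rk; fun_prop

lemma gmap_zero (t : ℝ) : gmap t 0 = 0 := by
  unfold gmap; simp

lemma gmap_pi (t : ℝ) : gmap t π = π := by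
  unfold gmap; simp

lemma subst_gmap {t : ℝ} (ht0 : 0 ≤ t) (ht1 : t < 1) {f : ℝ → ℝ} (hf : Continuous f) :
    (∫ ξ in (0:ℝ)..π, (1 - t ^ 2) / Rk t ξ * f (gmap t ξ)) = ∫ η in (0:ℝ)..π, f η := by
  have hcont : ContinuousOn (fun ξ => (1 - t ^ 2) / Rk t ξ) (Set.uIcc 0 π) :=
    (continuous_const.div (Rk_continuous t) fun x => (Rk_pos ht0 ht1 x).ne').continuousOn
  have h := intervalIntegral.integral_comp_smul_deriv
    (f := gmap t) (f' := fun ξ => (1 - t ^ 2) / Rk t ξ) (g := f)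
    (fun x _ => gmap_hasDerivAt ht0 ht1 x) hcont hf
  simp only [smul_eq_mul, Function.comp, gmap_zero, gmap_pi] at h
  exact h

lemma q_eq (t η : ℝ) : 1 + 2 * t * Real.cos η + t ^ 2 = Rk t (π - η) := by
  unfold Rk; rw [Real.cos_pi_sub]; ring

lemma q_gmap {t : ℝ} (ht0 : 0 ≤ t) (ht1 : t < 1) (ξ : ℝ) :
    1 + 2 * t * Real.cos (gmap t ξ) + t ^ 2 = (1 - t ^ 2) ^ 2 / Rk t ξ := by
  have hR := Rk_pos ht0 ht1 ξ
  rw [cos_gmap ht0 ht1]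
  field_simp
  unfold Rk
  ring

lemma cos_gmap_add {t : ℝ} (ht0 : 0 ≤ t) (ht1 : t < 1) (ξ : ℝ) :
    Real.cos (gmap t ξ) + t = (1 - t ^ 2) * (Real.cos ξ - t) / Rk t ξ := by
  have hR := Rk_pos ht0 ht1 ξ
  rw [cos_gmap ht0 ht1]
  field_simp
  unfold Rk
  ring


-- rpow helpers
lemma sinP_continuous {P : ℝ} (hP : 0 ≤ P) : Continuous (fun η => Real.sin η ^ P) :=
  Real.continuous_sin.rpow_const fun _ => Or.inr hP

lemma sq_rpow_half {x P : ℝ} (hx : 0 ≤ x) : (x ^ 2) ^ (P / 2) = x ^ P := by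
  rw [← Real.rpow_natCast x 2, ← Real.rpow_mul hx]
  congr 1
  push_cast
  ring

-- the A-instance pointwise identity
lemma Aident {t P : ℝ} (ht0 : 0 ≤ t) (ht1 : t < 1) (hP : 0 ≤ P) {ξ : ℝ} (hs : 0 ≤ Real.sin ξ) :
    (1 - t ^ 2) / Rk t ξ *
      (Real.sin (gmap t ξ) ^ P / (1 + 2 * t * Real.cos (gmap t ξ) + t ^ 2) ^ (P / 2))
    = (1 - t ^ 2) * (Real.sin ξ ^ P / Rk t ξ ^ (P / 2 + 1)) := by
  have hR := Rk_pos ht0 ht1 ξ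
  have h1t := one_sub_sq_pos ht0 ht1
  have hB : (0:ℝ) < Rk t ξ ^ (P / 2) := Real.rpow_pos_of_pos hR _
  have hC : (0:ℝ) < (1 - t ^ 2) ^ P := Real.rpow_pos_of_pos h1t _
  have e1 : Real.sin (gmap t ξ) ^ P
      = (1 - t ^ 2) ^ P * Real.sin ξ ^ P / (Rk t ξ ^ (P / 2)) ^ 2 := by
    rw [sin_gmap ht0 ht1, Real.div_rpow (by positivity) hR.le,
      Real.mul_rpow h1t.le hs, ← Real.rpow_natCast (Rk t ξ ^ (P/2)) 2,
      ← Real.rpow_mul hR.le]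
    norm_num
  have e2 : (1 + 2 * t * Real.cos (gmap t ξ) + t ^ 2) ^ (P / 2)
      = (1 - t ^ 2) ^ P / Rk t ξ ^ (P / 2) := by
    rw [q_gmap ht0 ht1, Real.div_rpow (by positivity) hR.le, sq_rpow_half h1t.le]
  have e3 : Rk t ξ ^ (P / 2 + 1) = Rk t ξ ^ (P / 2) * Rk t ξ :=
    Real.rpow_add_one hR.ne' _
  rw [e1, e2, e3]
  field_simp

-- the B-instance pointwise identity
lemma Bident {t P : ℝ} (ht0 : 0 ≤ t) (ht1 : t < 1) (hP : 0 ≤ P) {ξ : ℝ} (hs : 0 ≤ Real.sin ξ) :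
    (1 - t ^ 2) / Rk t ξ *
      (Real.sin (gmap t ξ) ^ P * (Real.cos (gmap t ξ) + t) /
        (1 + 2 * t * Real.cos (gmap t ξ) + t ^ 2) ^ (P / 2 + 1))
    = Real.sin ξ ^ P * (Real.cos ξ - t) / Rk t ξ ^ (P / 2 + 1) := by
  have hR := Rk_pos ht0 ht1 ξ
  have h1t := one_sub_sq_pos ht0 ht1
  have hB : (0:ℝ) < Rk t ξ ^ (P / 2) := Real.rpow_pos_of_pos hR _
  have hC : (0:ℝ) < (1 - t ^ 2) ^ P := Real.rpow_pos_of_pos h1t _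
  have e1 : Real.sin (gmap t ξ) ^ P
      = (1 - t ^ 2) ^ P * Real.sin ξ ^ P / (Rk t ξ ^ (P / 2)) ^ 2 := by
    rw [sin_gmap ht0 ht1, Real.div_rpow (by positivity) hR.le,
      Real.mul_rpow h1t.le hs, ← Real.rpow_natCast (Rk t ξ ^ (P/2)) 2,
      ← Real.rpow_mul hR.le]
    norm_num
  have e2 : (1 + 2 * t * Real.cos (gmap t ξ) + t ^ 2) ^ (P / 2 + 1)
      = (1 - t ^ 2) ^ P * (1 - t ^ 2) ^ 2 / (Rk t ξ ^ (P / 2) * Rk t ξ) := by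
    rw [q_gmap ht0 ht1, Real.div_rpow (by positivity) hR.le, Real.rpow_add_one hR.ne',
      Real.rpow_add (by positivity) _ 1, Real.rpow_one, sq_rpow_half h1t.le]
  have e3 : Rk t ξ ^ (P / 2 + 1) = Rk t ξ ^ (P / 2) * Rk t ξ :=
    Real.rpow_add_one hR.ne' _
  rw [e1, e2, e3, cos_gmap_add ht0 ht1]
  field_simp


lemma q_pos {t : ℝ} (ht0 : 0 ≤ t) (ht1 : t < 1) (η : ℝ) :
    0 < 1 + 2 * t * Real.cos η + t ^ 2 := by
  rw [q_eq]; exact Rk_pos ht0 ht1 _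

lemma q_continuous (t : ℝ) : Continuous fun η => 1 + 2 * t * Real.cos η + t ^ 2 := by
  fun_prop

lemma hs_mem {ξ : ℝ} (hξ : ξ ∈ Set.uIcc (0:ℝ) π) : 0 ≤ Real.sin ξ := by
  rw [Set.uIcc_of_le Real.pi_pos.le] at hξ
  exact Real.sin_nonneg_of_nonneg_of_le_pi hξ.1 hξ.2

lemma refl_integral (f : ℝ → ℝ) :
    (∫ η in (0:ℝ)..π, f (π - η)) = ∫ η in (0:ℝ)..π, f η := by
  have := intervalIntegral.integral_comp_sub_left (a := (0:ℝ)) (b := π) f π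
  simpa using this

lemma FG_relation {P t : ℝ} (hP : 0 ≤ P) (ht0 : 0 ≤ t) (ht1 : t < 1) :
    ((1 - t ^ 2) * ∫ ξ in (0:ℝ)..π, Real.sin ξ ^ P / Rk t ξ ^ (P / 2 + 1))
      = ∫ ξ in (0:ℝ)..π, Real.sin ξ ^ P / Rk t ξ ^ (P / 2) := by
  have hfA : Continuous fun η => Real.sin η ^ P / (1 + 2 * t * Real.cos η + t ^ 2) ^ (P / 2) :=
    (sinP_continuous hP).div
      ((q_continuous t).rpow_const fun x => Or.inl (q_pos ht0 ht1 x).ne')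
      fun x => (Real.rpow_pos_of_pos (q_pos ht0 ht1 x) _).ne'
  rw [← intervalIntegral.integral_const_mul]
  have step1 : (∫ ξ in (0:ℝ)..π, (1 - t ^ 2) * (Real.sin ξ ^ P / Rk t ξ ^ (P / 2 + 1)))
      = ∫ ξ in (0:ℝ)..π, (1 - t ^ 2) / Rk t ξ *
          (Real.sin (gmap t ξ) ^ P / (1 + 2 * t * Real.cos (gmap t ξ) + t ^ 2) ^ (P / 2)) := by
    apply intervalIntegral.integral_congr
    intro ξ hξ
    exact (Aident ht0 ht1 hP (hs_mem hξ)).symm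
  rw [step1, subst_gmap ht0 ht1 hfA, ← refl_integral]
  apply intervalIntegral.integral_congr
  intro η hη
  simp only [Real.sin_pi_sub, Real.cos_pi_sub]
  have hb : 1 + 2 * t * -Real.cos η + t ^ 2 = Rk t η := by unfold Rk; ring
  rw [hb]

lemma D_zero {P t : ℝ} (hP : 0 ≤ P) (ht0 : 0 ≤ t) (ht1 : t < 1) :
    (∫ ξ in (0:ℝ)..π, Real.sin ξ ^ P * (Real.cos ξ - t) / Rk t ξ ^ (P / 2 + 1)) = 0 := by
  set D := ∫ ξ in (0:ℝ)..π, Real.sin ξ ^ P * (Real.cos ξ - t) / Rk t ξ ^ (P / 2 + 1) with hD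
  have hfB : Continuous fun η => Real.sin η ^ P * (Real.cos η + t) /
      (1 + 2 * t * Real.cos η + t ^ 2) ^ (P / 2 + 1) :=
    ((sinP_continuous hP).mul (Real.continuous_cos.add continuous_const)).div
      ((q_continuous t).rpow_const fun x => Or.inl (q_pos ht0 ht1 x).ne')
      fun x => (Real.rpow_pos_of_pos (q_pos ht0 ht1 x) _).ne'
  have step1 : D = ∫ ξ in (0:ℝ)..π, (1 - t ^ 2) / Rk t ξ *
      (Real.sin (gmap t ξ) ^ P * (Real.cos (gmap t ξ) + t) /
        (1 + 2 * t * Real.cos (gmap t ξ) + t ^ 2) ^ (P / 2 + 1)) := by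
    rw [hD]
    apply intervalIntegral.integral_congr
    intro ξ hξ
    exact (Bident ht0 ht1 hP (hs_mem hξ)).symm
  have step2 : D = ∫ η in (0:ℝ)..π, Real.sin η ^ P * (Real.cos η + t) /
      (1 + 2 * t * Real.cos η + t ^ 2) ^ (P / 2 + 1) := by
    rw [step1, subst_gmap ht0 ht1 hfB]
  have step3 : D = -D := by
    nth_rewrite 1 [step2]
    rw [← refl_integral]
    rw [hD, ← intervalIntegral.integral_neg]
    apply intervalIntegral.integral_congr
    intro η hη
    simp only [Real.sin_pi_sub, Real.cos_pi_sub]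
    have hb : 1 + 2 * t * -Real.cos η + t ^ 2 = Rk t η := by unfold Rk; ring
    rw [hb]
    ring
  linarith


lemma Rk_cont2 : Continuous (fun p : ℝ × ℝ => Rk p.2 p.1) := by
  unfold Rk; fun_prop

lemma hDeriv {P : ℝ} (hP : 0 ≤ P) (ξ : ℝ) {s : ℝ} (hs0 : 0 ≤ s) (hs1 : s < 1) :
    HasDerivAt (fun s => Real.sin ξ ^ P / Rk s ξ ^ (P / 2))
      (P * (Real.sin ξ ^ P * (Real.cos ξ - s) / Rk s ξ ^ (P / 2 + 1))) s := by
  have hR := Rk_pos hs0 hs1 ξ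
  have hRd : HasDerivAt (fun s => Rk s ξ) (2 * s - 2 * Real.cos ξ) s := by
    unfold Rk
    have h' := (((hasDerivAt_id s).const_mul (2 * Real.cos ξ)).const_sub 1).add
      (hasDerivAt_pow 2 s)
    have hfe : (fun x : ℝ => 1 - 2 * Real.cos ξ * id x + x ^ 2)
        = fun s : ℝ => 1 - 2 * s * Real.cos ξ + s ^ 2 := by
      funext x; simp [id]; ring
    rw [← hfe]
    refine h'.congr_deriv ?_
    symm
    simp
    ring
  have hpow : HasDerivAt (fun s => Rk s ξ ^ (P / 2))
      ((2 * s - 2 * Real.cos ξ) * (P / 2) * Rk s ξ ^ (P / 2 - 1)) s :=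
    hRd.rpow_const (Or.inl hR.ne')
  have hdiv := (hasDerivAt_const s (Real.sin ξ ^ P)).div hpow
    (Real.rpow_pos_of_pos hR _).ne'
  refine hdiv.congr_deriv ?_
  symm
  have e2 : Rk s ξ ^ (P / 2 + 1) = Rk s ξ ^ (P / 2) * Rk s ξ := Real.rpow_add_one hR.ne' _
  have e4 : Rk s ξ ^ (P / 2 - 1) = Rk s ξ ^ (P / 2) / Rk s ξ := by
    rw [eq_div_iff hR.ne', ← Real.rpow_add_one hR.ne']; ring_nf
  rw [e2, e4]
  have hB := (Real.rpow_pos_of_pos hR (P / 2))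
  field_simp
  ring

lemma hxi_cont {P t : ℝ} (hP : 0 ≤ P) (ht0 : 0 ≤ t) (ht1 : t < 1) :
    ContinuousOn (fun q : ℝ × ℝ =>
        P * (Real.sin q.1 ^ P * (Real.cos q.1 - q.2) / Rk q.2 q.1 ^ (P / 2 + 1)))
      (Set.Icc 0 π ×ˢ Set.Icc 0 t) := by
  apply ContinuousOn.mul continuousOn_const
  apply ContinuousOn.div
  · exact (((sinP_continuous hP).comp continuous_fst).mul
      ((Real.continuous_cos.comp continuous_fst).sub continuous_snd)).continuousOn
  · exact (Rk_cont2.rpow_const fun x => Or.inr (by positivity)).continuousOn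
  · rintro ⟨ξ, s⟩ ⟨-, hs⟩
    exact (Real.rpow_pos_of_pos (Rk_pos hs.1 (lt_of_le_of_lt hs.2 ht1) ξ) _).ne'

lemma G_const {P t : ℝ} (hP : 0 ≤ P) (ht0 : 0 ≤ t) (ht1 : t < 1) :
    (∫ ξ in (0:ℝ)..π, Real.sin ξ ^ P / Rk t ξ ^ (P / 2))
      = ∫ ξ in (0:ℝ)..π, Real.sin ξ ^ P := by
  set h : ℝ → ℝ → ℝ := fun ξ s =>
    P * (Real.sin ξ ^ P * (Real.cos ξ - s) / Rk s ξ ^ (P / 2 + 1)) with hh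
  -- pointwise FTC in s
  have ftc : ∀ ξ : ℝ, Real.sin ξ ^ P / Rk t ξ ^ (P / 2) - Real.sin ξ ^ P
      = ∫ s in (0:ℝ)..t, h ξ s := by
    intro ξ
    have hcont : IntervalIntegrable (h ξ) volume 0 t := by
      apply ContinuousOn.intervalIntegrable
      apply continuousOn_const.mul
      apply ContinuousOn.div
      · fun_prop
      · exact (((Rk_cont2.comp (continuous_const.prodMk continuous_id)).rpow_const
          fun x => Or.inr (by positivity))).continuousOn
      · intro s hs
        rw [Set.uIcc_of_le ht0] at hs
        exact (Real.rpow_pos_of_pos (Rk_pos hs.1 (lt_of_le_of_lt hs.2 ht1) ξ) _).ne'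
    have := intervalIntegral.integral_eq_sub_of_hasDerivAt (f := fun s =>
        Real.sin ξ ^ P / Rk s ξ ^ (P / 2)) (f' := h ξ) ?hd hcont
    · have h0 : Rk 0 ξ = 1 := by unfold Rk; ring
      beta_reduce at this
      rw [h0, Real.one_rpow, div_one] at this
      rw [this]
    · intro s hs
      rw [Set.uIcc_of_le ht0] at hs
      exact hDeriv hP ξ hs.1 (lt_of_le_of_lt hs.2 ht1)
  -- both sides integrable
  have hGt : IntervalIntegrable (fun ξ => Real.sin ξ ^ P / Rk t ξ ^ (P / 2)) volume 0 π := by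
    apply Continuous.intervalIntegrable
    apply (sinP_continuous hP).div
    · exact (Rk_cont2.comp (continuous_id.prodMk continuous_const)).rpow_const
        fun x => Or.inr (by positivity)
    · exact fun x => (Real.rpow_pos_of_pos (Rk_pos ht0 ht1 x) _).ne'
  have hG0 : IntervalIntegrable (fun ξ => Real.sin ξ ^ P) volume 0 π :=
    (sinP_continuous hP).intervalIntegrable _ _
  have key : (∫ ξ in (0:ℝ)..π, (Real.sin ξ ^ P / Rk t ξ ^ (P / 2) - Real.sin ξ ^ P)) = 0 := by
    have congr1 : (∫ ξ in (0:ℝ)..π, (Real.sin ξ ^ P / Rk t ξ ^ (P / 2) - Real.sin ξ ^ P))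
        = ∫ ξ in (0:ℝ)..π, (∫ s in (0:ℝ)..t, h ξ s) := by
      apply intervalIntegral.integral_congr
      intro ξ _
      exact ftc ξ
    rw [congr1]
    -- convert to set integrals and swap
    have hin : ∀ ξ : ℝ, (∫ s in (0:ℝ)..t, h ξ s) = ∫ s in Set.Ioc (0:ℝ) t, h ξ s :=
      fun ξ => intervalIntegral.integral_of_le ht0
    rw [intervalIntegral.integral_of_le Real.pi_pos.le]
    simp_rw [hin]
    have hInt : Integrable (Function.uncurry h)
        ((volume.restrict (Set.Ioc (0:ℝ) π)).prod (volume.restrict (Set.Ioc (0:ℝ) t))) := by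
      rw [Measure.prod_restrict]
      have hc : ContinuousOn (Function.uncurry h) (Set.Icc 0 π ×ˢ Set.Icc 0 t) := by
        have := hxi_cont (t := t) hP ht0 ht1
        exact this
      have : IntegrableOn (Function.uncurry h) (Set.Icc 0 π ×ˢ Set.Icc 0 t)
          (volume.prod volume) := by
        rw [← Measure.volume_eq_prod]
        exact hc.integrableOn_compact (isCompact_Icc.prod isCompact_Icc)
      exact this.mono_set (Set.prod_mono Set.Ioc_subset_Icc_self Set.Ioc_subset_Icc_self)
    rw [MeasureTheory.integral_integral_swap hInt]
    have inner0 : ∀ s ∈ Set.Ioc (0:ℝ) t, (∫ ξ in Set.Ioc (0:ℝ) π, h ξ s) = 0 := by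
      intro s hs
      rw [← intervalIntegral.integral_of_le Real.pi_pos.le]
      have : (∫ ξ in (0:ℝ)..π, h ξ s)
          = P * ∫ ξ in (0:ℝ)..π, Real.sin ξ ^ P * (Real.cos ξ - s) / Rk s ξ ^ (P / 2 + 1) := by
        rw [← intervalIntegral.integral_const_mul]
      rw [this, D_zero hP hs.1.le (lt_of_le_of_lt hs.2 ht1), mul_zero]
    calc (∫ s in Set.Ioc (0:ℝ) t, ∫ ξ in Set.Ioc (0:ℝ) π, h ξ s)
        = ∫ s in Set.Ioc (0:ℝ) t, (0:ℝ) := by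
          apply MeasureTheory.setIntegral_congr_fun measurableSet_Ioc
          intro s hs
          exact inner0 s hs
      _ = 0 := by simp
  have := intervalIntegral.integral_sub hGt hG0
  rw [key] at this
  linarith [this]


end pointwise
end Landkof

open Landkof

theorem landkof_integral (p ρ : ℝ) (hp : 2 ≤ p) (hρ : 1 < ρ) :
    ∫ ξ in (0:ℝ)..π, (Real.sin ξ) ^ (p - 2) / (1 + ρ ^ 2 - 2 * ρ * Real.cos ξ) ^ (p / 2)
      = 1 / (ρ ^ (p - 2) * (ρ ^ 2 - 1)) * ∫ ξ in (0:ℝ)..π, (Real.sin ξ) ^ (p - 2) := by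
  have hP : (0:ℝ) ≤ p - 2 := by linarith
  have hρ0 : (0:ℝ) < ρ := by linarith
  set t : ℝ := ρ⁻¹ with hts
  have ht0 : 0 ≤ t := by positivity
  have ht1 : t < 1 := by
    rw [hts, inv_lt_one_iff₀]
    right; exact hρ
  have hρp : (0:ℝ) < ρ ^ p := Real.rpow_pos_of_pos hρ0 _
  have hker : ∀ ξ : ℝ, (1 + ρ ^ 2 - 2 * ρ * Real.cos ξ) ^ (p / 2)
      = ρ ^ p * Rk t ξ ^ ((p - 2) / 2 + 1) := by
    intro ξ
    have hbase : 1 + ρ ^ 2 - 2 * ρ * Real.cos ξ = ρ ^ 2 * Rk t ξ := by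
      unfold Rk
      rw [hts]
      field_simp
      ring
    rw [hbase, Real.mul_rpow (by positivity) (Rk_pos ht0 ht1 ξ).le]
    have h1 : (ρ ^ 2 : ℝ) ^ (p / 2) = ρ ^ p := by
      rw [← Real.rpow_natCast ρ 2, ← Real.rpow_mul hρ0.le]
      congr 1
      push_cast
      ring
    have h2 : (p - 2) / 2 + 1 = p / 2 := by ring
    rw [h1, h2]
  have hIeq : (∫ ξ in (0:ℝ)..π, (Real.sin ξ) ^ (p - 2) / (1 + ρ ^ 2 - 2 * ρ * Real.cos ξ) ^ (p / 2))
      = (1 / ρ ^ p) * ∫ ξ in (0:ℝ)..π, Real.sin ξ ^ (p - 2) / Rk t ξ ^ ((p - 2) / 2 + 1) := by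
    rw [← intervalIntegral.integral_const_mul]
    apply intervalIntegral.integral_congr
    intro ξ _
    beta_reduce
    rw [hker ξ]
    field_simp
  rw [hIeq]
  have hF := FG_relation hP ht0 ht1
  rw [G_const hP ht0 ht1] at hF
  have h1t := one_sub_sq_pos ht0 ht1
  have hFv : (∫ ξ in (0:ℝ)..π, Real.sin ξ ^ (p - 2) / Rk t ξ ^ ((p - 2) / 2 + 1))
      = (1 / (1 - t ^ 2)) * ∫ ξ in (0:ℝ)..π, Real.sin ξ ^ (p - 2) := by
    rw [one_div, ← hF, inv_mul_cancel_left₀ h1t.ne']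
  rw [hFv]
  have hsplit : ρ ^ p = ρ ^ (p - 2) * ρ ^ 2 := by
    rw [← Real.rpow_natCast ρ 2, ← Real.rpow_add hρ0]
    norm_num
  have hpm2 : (0:ℝ) < ρ ^ (p - 2) := Real.rpow_pos_of_pos hρ0 _
  have hsq : (1:ℝ) < ρ ^ 2 := by nlinarith
  have hcoef : (1 - t ^ 2) * ρ ^ p = ρ ^ (p - 2) * (ρ ^ 2 - 1) := by
    rw [hsplit, hts]
    field_simp
  rw [← mul_assoc]
  congr 1
  rw [div_mul_div_comm, one_mul, ← hcoef]
  ring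
end

section
/- Let $d \geq 3$ be an integer, $0 < \lambda < 1$, $s = (d-3) + 2\lambda$, $h > 0$, and $0 \leq r \leq 1$. Then $\int_0^r \frac{u^{d-2}\,du}{(u^2+h^2)^{s/2}\,(r^2-u^2)^{1-\lambda}} = \frac{(d+2\lambda-3)\,\Gamma(\lambda)\,\Gamma((d-1)/2)}{4\,\Gamma((d+2\lambda-1)/2)}\, \mathrm{B}\!\left(\frac{r^2}{r^2+h^2};\, \frac{d+2\lambda-3}{2},\, 1-\lambda\right)$. -/
open Real intervalIntegral

/-- The incomplete Beta function `B(z; a, b) = ∫_0^z t^(a-1) (1-t)^(b-1) dt`. -/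
noncomputable def incBeta (z a b : ℝ) : ℝ :=
  ∫ t in (0:ℝ)..z, t ^ (a - 1) * (1 - t) ^ (b - 1)

namespace PointChargeAux

open MeasureTheory Set

open Real MeasureTheory Set

lemma betaInt_integrable {p q : ℝ} (hp : 0 < p) (hq : 0 < q) :
    IntegrableOn (fun v : ℝ => v ^ (p-1) * (1-v) ^ (q-1)) (Ioo (0:ℝ) 1) := by
  have h := (Complex.betaIntegral_convergent (u := (p:ℂ)) (v := (q:ℂ))
    (by simpa using hp) (by simpa using hq))
  have h2 : IntegrableOn (fun x : ℝ => (x:ℂ) ^ ((p:ℂ)-1) * (1-(x:ℂ)) ^ ((q:ℂ)-1))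
      (Ioc (0:ℝ) 1) := by
    rwa [intervalIntegrable_iff_integrableOn_Ioc_of_le (by norm_num)] at h
  have h2n : IntegrableOn (fun x : ℝ => ‖(x:ℂ) ^ ((p:ℂ)-1) * (1-(x:ℂ)) ^ ((q:ℂ)-1)‖) (Ioc (0:ℝ) 1) := h2.norm
  have h3 := h2n.mono_set Ioo_subset_Ioc_self
  refine (IntegrableOn.congr_fun h3 ?_ measurableSet_Ioo)
  intro x hx
  obtain ⟨hx0, hx1⟩ := hx
  have h1x : (0:ℝ) < 1 - x := by linarith
  simp only [norm_mul]
  have e1 : ((1:ℂ) - (x:ℂ)) = ((1 - x : ℝ) : ℂ) := by push_cast; ring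
  rw [Complex.norm_cpow_eq_rpow_re_of_pos hx0, e1, Complex.norm_cpow_eq_rpow_re_of_pos h1x]
  norm_num

lemma keyClosedForm {p q W : ℝ} (hp : 0 < p) (hq : 0 < q) (hW : 0 ≤ W) :
    ∫ v in Ioo (0:ℝ) 1, v ^ (p-1) * (1-v) ^ (q-1) * (1+W*v) ^ (-(p+q))
      = (1+W) ^ (-p) * ∫ v in Ioo (0:ℝ) 1, v ^ (p-1) * (1-v) ^ (q-1) := by
  have h1W : (0:ℝ) < 1 + W := by linarith
  set g : ℝ → ℝ := fun s => s / (1 + W * (1 - s)) with hg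
  have hDpos : ∀ s : ℝ, s < 1 → 0 < 1 + W * (1 - s) := by
    intro s hs
    have : 0 ≤ W * (1 - s) := mul_nonneg hW (by linarith)
    linarith
  -- derivative
  have hderiv : ∀ s ∈ Ioo (0:ℝ) 1, HasDerivWithinAt g
      ((1+W) / (1 + W * (1-s))^2) (Ioo (0:ℝ) 1) s := by
    intro s hs
    have hD := hDpos s hs.2
    have h1 : HasDerivAt (fun s : ℝ => s) 1 s := hasDerivAt_id s
    have h2 : HasDerivAt (fun s : ℝ => 1 + W * (1 - s)) (-W) s := by
      simpa using ((hasDerivAt_id s).const_sub 1).const_mul W |>.const_add 1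
    have := h1.div h2 (ne_of_gt hD)
    refine this.hasDerivWithinAt.congr_deriv ?_
    field_simp
    ring
  -- injectivity
  have hinj : InjOn g (Ioo (0:ℝ) 1) := by
    intro s hs t ht hst
    have hDs := hDpos s hs.2
    have hDt := hDpos t ht.2
    rw [hg] at hst
    field_simp at hst
    nlinarith [hst]
  -- image
  have himg : g '' (Ioo (0:ℝ) 1) = Ioo (0:ℝ) 1 := by
    ext v
    constructor
    · rintro ⟨s, hs, rfl⟩
      have hD := hDpos s hs.2
      constructor
      · exact div_pos hs.1 hD
      · rw [div_lt_one hD]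
        nlinarith [hs.2, mul_nonneg hW (sub_nonneg.2 hs.2.le)]
    · intro hv
      have h1Wv : (0:ℝ) < 1 + W * v := by nlinarith [hv.1]
      refine ⟨v * (1+W) / (1 + W * v), ⟨?_, ?_⟩, ?_⟩
      · exact div_pos (mul_pos hv.1 h1W) h1Wv
      · rw [div_lt_one h1Wv]; nlinarith [hv.2]
      · rw [hg]
        beta_reduce
        have hden : 1 + W * (1 - v * (1 + W) / (1 + W * v)) = (1 + W) / (1 + W * v) := by
          field_simp; ring
        rw [hden]
        field_simp
        exact mul_div_cancel_right₀ v (ne_of_gt (by linarith [mul_comm v W]))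
  calc ∫ v in Ioo (0:ℝ) 1, v ^ (p-1) * (1-v) ^ (q-1) * (1+W*v) ^ (-(p+q))
      = ∫ v in g '' (Ioo (0:ℝ) 1), v ^ (p-1) * (1-v) ^ (q-1) * (1+W*v) ^ (-(p+q)) := by
        rw [himg]
    _ = ∫ s in Ioo (0:ℝ) 1, |(1+W) / (1 + W * (1-s))^2| •
          ((g s) ^ (p-1) * (1-(g s)) ^ (q-1) * (1+W*(g s)) ^ (-(p+q))) := by
        exact integral_image_eq_integral_abs_deriv_smul measurableSet_Ioo hderiv hinj _
    _ = ∫ s in Ioo (0:ℝ) 1, (1+W) ^ (-p) * (s ^ (p-1) * (1-s) ^ (q-1)) := by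
        refine setIntegral_congr_fun measurableSet_Ioo ?_
        intro s hs
        obtain ⟨hs0, hs1⟩ := hs
        have hD := hDpos s hs1
        have h1s : (0:ℝ) < 1 - s := by linarith
        have hgs : g s = s / (1 + W * (1-s)) := rfl
        have e1 : 1 - g s = (1-s) * (1+W) / (1 + W * (1-s)) := by
          rw [hgs]; field_simp; ring
        have e2 : 1 + W * g s = (1+W) / (1 + W * (1-s)) := by
          rw [hgs]; field_simp; ring
        beta_reduce
        rw [hgs, e1, e2, smul_eq_mul, abs_of_pos (by positivity)]
        rw [Real.div_rpow hs0.le hD.le, Real.div_rpow (by positivity) hD.le,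
          Real.div_rpow h1W.le hD.le, Real.mul_rpow h1s.le h1W.le]
        simp only [Real.rpow_def_of_pos hs0, Real.rpow_def_of_pos hD, Real.rpow_def_of_pos h1s,
          Real.rpow_def_of_pos h1W]
        have e3 : (1 + W * (1-s))^2 = Real.exp (Real.log (1 + W * (1-s)) * 2) := by
          rw [← Real.rpow_natCast _ 2, Real.rpow_def_of_pos hD]; norm_num
        rw [e3]
        have e4 : (1+W) = rexp (log (1+W) * 1) := by rw [mul_one, Real.exp_log h1W]
        nth_rewrite 1 [e4]
        rw [div_eq_mul_inv, div_eq_mul_inv, div_eq_mul_inv, div_eq_mul_inv, ← Real.exp_neg,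
          ← Real.exp_neg, ← Real.exp_neg, ← Real.exp_neg]
        simp only [← Real.exp_add]
        rw [Real.exp_eq_exp]
        ring
    _ = (1+W) ^ (-p) * ∫ v in Ioo (0:ℝ) 1, v ^ (p-1) * (1-v) ^ (q-1) := by
        rw [MeasureTheory.integral_const_mul]

lemma symmKernel {b c p q Z : ℝ} (hp : 0 < p) (hq : 0 < q) (hb : 0 < b) (hc : 0 < c)
    (hZ : 0 ≤ Z) (hsum : p + q = b + c) :
    (∫ v in Ioo (0:ℝ) 1, v ^ (p-1) * (1-v) ^ (q-1)) *
      ∫ u in Ioo (0:ℝ) 1, u ^ (b-1) * (1-u) ^ (c-1) * (1+Z*u) ^ (-p)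
    = (∫ u in Ioo (0:ℝ) 1, u ^ (b-1) * (1-u) ^ (c-1)) *
      ∫ v in Ioo (0:ℝ) 1, v ^ (p-1) * (1-v) ^ (q-1) * (1+Z*v) ^ (-b) := by
  set μ := (volume : Measure ℝ).restrict (Ioo (0:ℝ) 1) with hμ
  set G : ℝ × ℝ → ℝ := fun z => z.1 ^ (b-1) * (1-z.1) ^ (c-1) *
        (z.2 ^ (p-1) * (1-z.2) ^ (q-1) * (1+Z*z.1*z.2) ^ (-(p+q))) with hG
  have hGmeas : AEStronglyMeasurable G (μ.prod μ) := by
    rw [hμ, Measure.prod_restrict]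
    refine ContinuousOn.aestronglyMeasurable ?_ (measurableSet_Ioo.prod measurableSet_Ioo)
    have hc1 : ContinuousOn (fun z : ℝ × ℝ => z.1) (Ioo (0:ℝ) 1 ×ˢ Ioo (0:ℝ) 1) :=
      continuous_fst.continuousOn
    have hc2 : ContinuousOn (fun z : ℝ × ℝ => z.2) (Ioo (0:ℝ) 1 ×ˢ Ioo (0:ℝ) 1) :=
      continuous_snd.continuousOn
    refine ContinuousOn.mul (ContinuousOn.mul ?_ ?_) (ContinuousOn.mul (ContinuousOn.mul ?_ ?_) ?_)
    · exact hc1.rpow_const fun z hz => Or.inl (ne_of_gt hz.1.1)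
    · refine (continuousOn_const.sub hc1).rpow_const fun z hz => Or.inl ?_
      have := hz.1.2; intro h
      have : (1:ℝ) - z.1 = 0 := h
      linarith
    · exact hc2.rpow_const fun z hz => Or.inl (ne_of_gt hz.2.1)
    · refine (continuousOn_const.sub hc2).rpow_const fun z hz => Or.inl ?_
      have := hz.2.2; intro h
      have : (1:ℝ) - z.2 = 0 := h
      linarith
    · refine (continuousOn_const.add ((continuousOn_const.mul hc1).mul hc2)).rpow_const
        fun z hz => Or.inl ?_
      have h0 : 0 ≤ Z * z.1 * z.2 := mul_nonneg (mul_nonneg hZ hz.1.1.le) hz.2.1.le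
      exact ne_of_gt (by simp only [Pi.add_apply, Pi.mul_apply]; linarith)
  have hGint : Integrable G (μ.prod μ) := by
    have hmaj : Integrable
        (fun z : ℝ × ℝ => (z.1 ^ (b-1) * (1-z.1) ^ (c-1)) * (z.2 ^ (p-1) * (1-z.2) ^ (q-1)))
        (μ.prod μ) :=
      Integrable.mul_prod (betaInt_integrable hb hc) (betaInt_integrable hp hq)
    refine hmaj.mono' hGmeas ?_
    rw [hμ, Measure.prod_restrict]
    filter_upwards [ae_restrict_mem (measurableSet_Ioo.prod measurableSet_Ioo)] with z hz
    obtain ⟨⟨hu0, hu1⟩, ⟨hv0, hv1⟩⟩ := hz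
    have h1u : (0:ℝ) < 1 - z.1 := by linarith
    have h1v : (0:ℝ) < 1 - z.2 := by linarith
    have hker : (0:ℝ) ≤ Z * z.1 * z.2 := mul_nonneg (mul_nonneg hZ hu0.le) hv0.le
    have hK1 : (1 + Z*z.1*z.2) ^ (-(p+q)) ≤ 1 :=
      Real.rpow_le_one_of_one_le_of_nonpos (by linarith) (by linarith)
    have hKpos : (0:ℝ) < (1 + Z*z.1*z.2) ^ (-(p+q)) := Real.rpow_pos_of_pos (by linarith) _
    rw [hG]
    have hGnn : (0:ℝ) ≤ z.1 ^ (b-1) * (1-z.1) ^ (c-1) *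
        (z.2 ^ (p-1) * (1-z.2) ^ (q-1) * (1+Z*z.1*z.2) ^ (-(p+q))) := by positivity
    rw [Real.norm_eq_abs, abs_of_nonneg hGnn]
    calc z.1 ^ (b-1) * (1-z.1) ^ (c-1) *
        (z.2 ^ (p-1) * (1-z.2) ^ (q-1) * (1+Z*z.1*z.2) ^ (-(p+q)))
        ≤ z.1 ^ (b-1) * (1-z.1) ^ (c-1) * (z.2 ^ (p-1) * (1-z.2) ^ (q-1) * 1) := by
          gcongr <;> positivity
      _ = z.1 ^ (b-1) * (1-z.1) ^ (c-1) * (z.2 ^ (p-1) * (1-z.2) ^ (q-1)) := by ring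
  calc (∫ v in Ioo (0:ℝ) 1, v ^ (p-1) * (1-v) ^ (q-1)) *
        ∫ u in Ioo (0:ℝ) 1, u ^ (b-1) * (1-u) ^ (c-1) * (1+Z*u) ^ (-p)
      = ∫ u in Ioo (0:ℝ) 1, ∫ v in Ioo (0:ℝ) 1, G (u, v) := by
        rw [← MeasureTheory.integral_const_mul]
        refine setIntegral_congr_fun measurableSet_Ioo fun u hu => ?_
        obtain ⟨hu0, hu1⟩ := hu
        have hW : 0 ≤ Z * u := mul_nonneg hZ hu0.le
        have := keyClosedForm hp hq hW
        calc (∫ v in Ioo (0:ℝ) 1, v ^ (p-1) * (1-v) ^ (q-1)) *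
              (u ^ (b-1) * (1-u) ^ (c-1) * (1+Z*u) ^ (-p))
            = (u ^ (b-1) * (1-u) ^ (c-1)) *
              ((1+Z*u) ^ (-p) * ∫ v in Ioo (0:ℝ) 1, v ^ (p-1) * (1-v) ^ (q-1)) := by ring
          _ = (u ^ (b-1) * (1-u) ^ (c-1)) *
              ∫ v in Ioo (0:ℝ) 1, v ^ (p-1) * (1-v) ^ (q-1) * (1+(Z*u)*v) ^ (-(p+q)) := by
              rw [this]
          _ = ∫ v in Ioo (0:ℝ) 1, G (u, v) := by
              rw [← MeasureTheory.integral_const_mul]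
              all_goals refine setIntegral_congr_fun measurableSet_Ioo fun v hv => ?_
              all_goals simp only [hG]
              all_goals ring_nf
    _ = ∫ v in Ioo (0:ℝ) 1, ∫ u in Ioo (0:ℝ) 1, G (u, v) := integral_integral_swap hGint
    _ = (∫ u in Ioo (0:ℝ) 1, u ^ (b-1) * (1-u) ^ (c-1)) *
        ∫ v in Ioo (0:ℝ) 1, v ^ (p-1) * (1-v) ^ (q-1) * (1+Z*v) ^ (-b) := by
        rw [← MeasureTheory.integral_const_mul]
        refine setIntegral_congr_fun measurableSet_Ioo fun v hv => ?_
        obtain ⟨hv0, hv1⟩ := hv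
        have hW : 0 ≤ Z * v := mul_nonneg hZ hv0.le
        have hkey := keyClosedForm hb hc hW
        calc (∫ u in Ioo (0:ℝ) 1, G (u, v))
            = ∫ u in Ioo (0:ℝ) 1, (v ^ (p-1) * (1-v) ^ (q-1)) *
                (u ^ (b-1) * (1-u) ^ (c-1) * (1+(Z*v)*u) ^ (-(b+c))) := by
              refine setIntegral_congr_fun measurableSet_Ioo fun u hu => ?_
              simp only [hG]
              rw [show -(p+q) = -(b+c) by rw [hsum]]
              all_goals ring_nf
          _ = (v ^ (p-1) * (1-v) ^ (q-1)) *
              ∫ u in Ioo (0:ℝ) 1, u ^ (b-1) * (1-u) ^ (c-1) * (1+(Z*v)*u) ^ (-(b+c)) := by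
              rw [MeasureTheory.integral_const_mul]
          _ = (v ^ (p-1) * (1-v) ^ (q-1)) *
              ((1+Z*v) ^ (-b) * ∫ u in Ioo (0:ℝ) 1, u ^ (b-1) * (1-u) ^ (c-1)) := by rw [hkey]
          _ = (v ^ (p-1) * (1-v) ^ (q-1) * (1+Z*v) ^ (-b)) *
              ∫ u in Ioo (0:ℝ) 1, u ^ (b-1) * (1-u) ^ (c-1) := by ring
          _ = _ := by ring

lemma betaGamma {p q : ℝ} (hp : 0 < p) (hq : 0 < q) :
    ∫ v in Ioo (0:ℝ) 1, v ^ (p-1) * (1-v) ^ (q-1)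
      = Real.Gamma p * Real.Gamma q / Real.Gamma (p+q) := by
  have h1 : (∫ v in Ioo (0:ℝ) 1, v ^ (p-1) * (1-v) ^ (q-1))
      = ∫ v in (0:ℝ)..1, v ^ (p-1) * (1-v) ^ (q-1) := by
    rw [intervalIntegral.integral_of_le (by norm_num : (0:ℝ) ≤ 1),
      ← integral_Ioc_eq_integral_Ioo]
  have hbc : Complex.betaIntegral p q = ((∫ v in (0:ℝ)..1, v ^ (p-1) * (1-v) ^ (q-1) : ℝ) : ℂ) := by
    rw [Complex.betaIntegral, ← intervalIntegral.integral_ofReal]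
    refine intervalIntegral.integral_congr_ae ?_
    have hne : ∀ᵐ x : ℝ, x ≠ 1 := by
      refine ae_iff.mpr ?_
      simpa using volume_singleton (a := (1:ℝ))
    filter_upwards [hne] with x hx1 hmem
    rw [Set.uIoc_of_le (by norm_num : (0:ℝ) ≤ 1)] at hmem
    obtain ⟨hx0, hx1'⟩ := hmem
    have hxlt : x < 1 := lt_of_le_of_ne hx1' hx1
    have h1x : (0:ℝ) < 1 - x := by linarith
    have e1 : ((1:ℂ) - (x:ℂ)) = ((1 - x : ℝ) : ℂ) := by push_cast; ring
    rw [e1]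
    have ep : ((p:ℂ) - 1) = ((p - 1 : ℝ) : ℂ) := by push_cast; ring
    have eq' : ((q:ℂ) - 1) = ((q - 1 : ℝ) : ℂ) := by push_cast; ring
    rw [ep, eq', ← Complex.ofReal_cpow hx0.le, ← Complex.ofReal_cpow h1x.le]
    push_cast; ring
  have hG := Complex.Gamma_mul_Gamma_eq_betaIntegral
    (s := (p:ℂ)) (t := (q:ℂ)) (by simpa using hp) (by simpa using hq)
  rw [hbc] at hG
  have hpq : ((p:ℂ) + (q:ℂ)) = ((p+q : ℝ) : ℂ) := by push_cast; ring
  rw [hpq, Complex.Gamma_ofReal, Complex.Gamma_ofReal, Complex.Gamma_ofReal] at hG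
  have hG' : Real.Gamma p * Real.Gamma q
      = Real.Gamma (p+q) * ∫ v in (0:ℝ)..1, v ^ (p-1) * (1-v) ^ (q-1) := by
    exact_mod_cast hG
  have hGpos : 0 < Real.Gamma (p+q) := Real.Gamma_pos_of_pos (by linarith)
  rw [h1]
  field_simp [hG']
  rw [hG']; ring

lemma lhsSub {a lam h r : ℝ} (ha : 0 < a) (hl0 : 0 < lam) (hl1 : lam < 1)
    (hh : 0 < h) (hr : 0 < r) :
    ∫ u in Ioo (0:ℝ) r, u ^ (2*a - 2*lam + 1) /
        ((u^2 + h^2) ^ a * (r^2 - u^2) ^ (1-lam))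
      = 2⁻¹ * (r^2) ^ a * (h^2) ^ (-a) *
        ∫ v in Ioo (0:ℝ) 1, v ^ ((a+1-lam)-1) * (1-v) ^ (lam-1) * (1+(r^2/h^2)*v) ^ (-a) := by
  set Z := r^2/h^2 with hZdef
  have hZ : 0 < Z := by positivity
  set g : ℝ → ℝ := fun v => r * Real.sqrt v with hg
  have hderiv : ∀ v ∈ Ioo (0:ℝ) 1, HasDerivWithinAt g (r / (2 * Real.sqrt v)) (Ioo (0:ℝ) 1) v := by
    intro v hv
    have := (Real.hasDerivAt_sqrt (ne_of_gt hv.1)).const_mul r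
    refine this.hasDerivWithinAt.congr_deriv ?_
    field_simp
  have hinj : InjOn g (Ioo (0:ℝ) 1) := by
    intro x hx y hy hxy
    simp only [hg] at hxy
    have h2 := mul_left_cancel₀ (ne_of_gt hr) hxy
    have hx2 := Real.sq_sqrt hx.1.le
    have hy2 := Real.sq_sqrt hy.1.le
    calc x = Real.sqrt x ^ 2 := hx2.symm
      _ = Real.sqrt y ^ 2 := by rw [h2]
      _ = y := hy2
  have himg : g '' (Ioo (0:ℝ) 1) = Ioo (0:ℝ) r := by
    ext u
    constructor
    · rintro ⟨v, hv, rfl⟩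
      have h1 : 0 < Real.sqrt v := Real.sqrt_pos.2 hv.1
      have h2 : Real.sqrt v < 1 := by
        rw [show (1:ℝ) = Real.sqrt 1 by simp]
        exact Real.sqrt_lt_sqrt hv.1.le hv.2
      simp only [hg]
      exact ⟨mul_pos hr h1, by nlinarith⟩
    · intro hu
      have hu2 : u^2 < r^2 := by nlinarith [hu.1, hu.2]
      refine ⟨u^2 / r^2, ⟨div_pos (pow_pos hu.1 2) (pow_pos hr 2),
        by rw [div_lt_one (by positivity)]; exact hu2⟩, ?_⟩
      simp only [hg]
      rw [show u^2/r^2 = (u/r)^2 by rw [div_pow], Real.sqrt_sq (div_pos hu.1 hr).le]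
      field_simp
  calc ∫ u in Ioo (0:ℝ) r, u ^ (2*a - 2*lam + 1) / ((u^2 + h^2) ^ a * (r^2 - u^2) ^ (1-lam))
      = ∫ u in g '' (Ioo (0:ℝ) 1),
          u ^ (2*a - 2*lam + 1) / ((u^2 + h^2) ^ a * (r^2 - u^2) ^ (1-lam)) := by rw [himg]
    _ = ∫ v in Ioo (0:ℝ) 1, |r / (2 * Real.sqrt v)| •
          ((g v) ^ (2*a - 2*lam + 1) / (((g v)^2 + h^2) ^ a * (r^2 - (g v)^2) ^ (1-lam))) :=
        integral_image_eq_integral_abs_deriv_smul measurableSet_Ioo hderiv hinj _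
    _ = ∫ v in Ioo (0:ℝ) 1, 2⁻¹ * (r^2) ^ a * (h^2) ^ (-a) *
          (v ^ ((a+1-lam)-1) * (1-v) ^ (lam-1) * (1+Z*v) ^ (-a)) := by
        refine setIntegral_congr_fun measurableSet_Ioo fun v hv => ?_
        obtain ⟨hv0, hv1⟩ := hv
        have hsv : 0 < Real.sqrt v := Real.sqrt_pos.2 hv0
        have h1v : (0:ℝ) < 1 - v := by linarith
        have h1Zv : (0:ℝ) < 1 + Z*v := by nlinarith
        have hgv : g v = r * Real.sqrt v := rfl
        have hgv2 : (g v)^2 = r^2 * v := by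
          rw [hgv, mul_pow, Real.sq_sqrt hv0.le]
        have e1 : (g v)^2 + h^2 = h^2 * (1 + Z*v) := by
          rw [hgv2, hZdef]; field_simp; ring
        have e2 : r^2 - (g v)^2 = r^2 * (1-v) := by rw [hgv2]; ring
        have hrv : 0 < r * Real.sqrt v := mul_pos hr hsv
        beta_reduce
        rw [hgv, e1, e2, smul_eq_mul, abs_of_pos (by positivity)]
        rw [Real.mul_rpow (by positivity) h1Zv.le, Real.mul_rpow (by positivity) h1v.le]
        have hsq : Real.sqrt v = Real.exp (Real.log v / 2) := by
          rw [← Real.log_sqrt hv0.le, Real.exp_log hsv]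
        simp only [Real.rpow_def_of_pos hrv, Real.rpow_def_of_pos (show (0:ℝ) < h^2 by positivity),
          Real.rpow_def_of_pos h1Zv, Real.rpow_def_of_pos (show (0:ℝ) < r^2 by positivity),
          Real.rpow_def_of_pos h1v, Real.rpow_def_of_pos hv0]
        rw [Real.log_mul (ne_of_gt hr) (ne_of_gt hsv), hsq, Real.log_exp]
        simp only [Real.log_pow]
        push_cast
        have hpos1 : (0:ℝ) < r / (2 * rexp (Real.log v / 2)) *
            (rexp ((Real.log r + Real.log v / 2) * (2 * a - 2 * lam + 1)) /
              (rexp (2 * Real.log h * a) * rexp (Real.log (1 + Z * v) * a) *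
                (rexp (2 * Real.log r * (1 - lam)) * rexp (Real.log (1 - v) * (1 - lam))))) := by
          positivity
        have hpos2 : (0:ℝ) < 2⁻¹ * rexp (2 * Real.log r * a) * rexp (2 * Real.log h * -a) *
            (rexp (Real.log v * (a + 1 - lam - 1)) * rexp (Real.log (1 - v) * (lam - 1)) *
              rexp (Real.log (1 + Z * v) * -a)) := by positivity
        refine Real.log_injOn_pos (Set.mem_Ioi.2 hpos1) (Set.mem_Ioi.2 hpos2) ?_
        rw [Real.log_mul (by positivity) (by positivity), Real.log_mul (by positivity)
            (by positivity), Real.log_mul (by positivity) (by positivity),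
          Real.log_div (by positivity) (by positivity),
          Real.log_div (by positivity) (by positivity),
          Real.log_mul (by positivity) (by positivity),
          Real.log_mul (by positivity) (by positivity),
          Real.log_mul (by positivity) (by positivity),
          Real.log_mul (by positivity) (by positivity),
          Real.log_mul (by positivity) (by positivity)]
        simp only [Real.log_exp, Real.log_inv]
        rw [Real.log_mul (ne_of_gt (by positivity)) (Real.exp_ne_zero _),
          Real.log_mul (Real.exp_ne_zero _) (Real.exp_ne_zero _), Real.log_exp, Real.log_exp,
          Real.log_exp]
        ring
    _ = 2⁻¹ * (r^2) ^ a * (h^2) ^ (-a) *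
        ∫ v in Ioo (0:ℝ) 1, v ^ ((a+1-lam)-1) * (1-v) ^ (lam-1) * (1+Z*v) ^ (-a) := by
        rw [MeasureTheory.integral_const_mul]

lemma incBetaSub {a lam Z : ℝ} (ha : 0 < a) (hZ : 0 < Z) :
    ∫ t in Ioo (0:ℝ) (Z/(1+Z)), t ^ (a-1) * (1-t) ^ ((1-lam)-1)
      = Z ^ a * ∫ v in Ioo (0:ℝ) 1, v ^ (a-1) * (1-v) ^ ((1:ℝ)-1) * (1+Z*v) ^ (-(a+1-lam)) := by
  have h1Z : (0:ℝ) < 1 + Z := by linarith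
  set g : ℝ → ℝ := fun v => Z*v / (1 + Z*v) with hg
  have hDpos : ∀ v : ℝ, 0 < v → (0:ℝ) < 1 + Z*v := fun v hv => by nlinarith
  have hderiv : ∀ v ∈ Ioo (0:ℝ) 1, HasDerivWithinAt g (Z / (1 + Z*v)^2) (Ioo (0:ℝ) 1) v := by
    intro v hv
    have hD := hDpos v hv.1
    have h1 : HasDerivAt (fun v : ℝ => Z*v) Z v := by
      simpa using (hasDerivAt_id v).const_mul Z
    have h2 : HasDerivAt (fun v : ℝ => 1 + Z*v) Z v := by
      simpa using ((hasDerivAt_id v).const_mul Z).const_add 1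
    have := h1.div h2 (ne_of_gt hD)
    refine this.hasDerivWithinAt.congr_deriv ?_
    field_simp
    ring
  have hinj : InjOn g (Ioo (0:ℝ) 1) := by
    intro x hx y hy hxy
    have hDx := hDpos x hx.1
    have hDy := hDpos y hy.1
    simp only [hg] at hxy
    field_simp at hxy
    nlinarith [hxy]
  have himg : g '' (Ioo (0:ℝ) 1) = Ioo (0:ℝ) (Z/(1+Z)) := by
    ext t
    constructor
    · rintro ⟨v, hv, rfl⟩
      have hD := hDpos v hv.1
      simp only [hg]
      constructor
      · exact div_pos (mul_pos hZ hv.1) hD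
      · rw [div_lt_div_iff₀ hD h1Z]
        nlinarith [hv.2]
    · intro ht
      have ht0 := ht.1
      have htZ := ht.2
      have ht1 : t < 1 := lt_trans htZ (by rw [div_lt_one h1Z]; linarith)
      have h1t : (0:ℝ) < 1 - t := by linarith
      rw [lt_div_iff₀ h1Z] at htZ
      refine ⟨t / (Z * (1-t)), ⟨div_pos ht0 (mul_pos hZ h1t), ?_⟩, ?_⟩
      · rw [div_lt_one (mul_pos hZ h1t)]
        nlinarith
      · simp only [hg]
        have hne : Z * (1-t) ≠ 0 := ne_of_gt (mul_pos hZ h1t)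
        field_simp
        ring
  calc ∫ t in Ioo (0:ℝ) (Z/(1+Z)), t ^ (a-1) * (1-t) ^ ((1-lam)-1)
      = ∫ t in g '' (Ioo (0:ℝ) 1), t ^ (a-1) * (1-t) ^ ((1-lam)-1) := by rw [himg]
    _ = ∫ v in Ioo (0:ℝ) 1, |Z / (1 + Z*v)^2| • ((g v) ^ (a-1) * (1-(g v)) ^ ((1-lam)-1)) :=
        integral_image_eq_integral_abs_deriv_smul measurableSet_Ioo hderiv hinj _
    _ = ∫ v in Ioo (0:ℝ) 1, Z ^ a * (v ^ (a-1) * (1-v) ^ ((1:ℝ)-1) * (1+Z*v) ^ (-(a+1-lam))) := by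
        refine setIntegral_congr_fun measurableSet_Ioo fun v hv => ?_
        obtain ⟨hv0, hv1⟩ := hv
        have hD := hDpos v hv0
        have hgv : g v = Z*v / (1 + Z*v) := rfl
        have e1 : 1 - g v = 1 / (1 + Z*v) := by rw [hgv]; field_simp; ring
        beta_reduce
        rw [hgv, e1, smul_eq_mul, abs_of_pos (by positivity)]
        rw [Real.div_rpow (by positivity) hD.le, Real.div_rpow (by norm_num) hD.le,
          Real.mul_rpow hZ.le hv0.le]
        rw [show (1:ℝ)-1 = 0 by norm_num, Real.rpow_zero, mul_one, Real.one_rpow, one_div,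
          ← Real.rpow_neg hD.le]
        simp only [Real.rpow_def_of_pos hZ, Real.rpow_def_of_pos hv0, Real.rpow_def_of_pos hD]
        have e3 : (1 + Z*v)^2 = rexp (Real.log (1 + Z*v) * 2) := by
          rw [← Real.rpow_natCast _ 2, Real.rpow_def_of_pos hD]; norm_num
        rw [e3]
        refine Real.log_injOn_pos (Set.mem_Ioi.2 (by positivity)) (Set.mem_Ioi.2 (by positivity)) ?_
        rw [Real.log_mul (by positivity) (by positivity), Real.log_mul (by positivity)
            (by positivity), Real.log_mul (by positivity) (by positivity),
          Real.log_div (by positivity) (by positivity),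
          Real.log_div (by positivity) (by positivity),
          Real.log_mul (by positivity) (by positivity),
          Real.log_mul (Real.exp_ne_zero _) (Real.exp_ne_zero _)]
        simp only [Real.log_exp]
        ring
    _ = Z ^ a * ∫ v in Ioo (0:ℝ) 1, v ^ (a-1) * (1-v) ^ ((1:ℝ)-1) * (1+Z*v) ^ (-(a+1-lam)) := by
        rw [MeasureTheory.integral_const_mul]

lemma betaOne {a : ℝ} (ha : 0 < a) :
    ∫ v in Ioo (0:ℝ) 1, v ^ (a-1) * (1-v) ^ ((1:ℝ)-1) = 1/a := by
  rw [betaGamma ha one_pos, Real.Gamma_one, Real.Gamma_add_one (ne_of_gt ha)]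
  have := Real.Gamma_pos_of_pos ha
  field_simp

end PointChargeAux

open PointChargeAux MeasureTheory Set in
theorem point_charge_abel_integral (d : ℕ) (lam h r : ℝ) (hd : 3 ≤ d) (hl0 : 0 < lam)
    (hl1 : lam < 1) (hh : 0 < h) (hr0 : 0 ≤ r) (hr1 : r ≤ 1) :
    ∫ u in (0:ℝ)..r,
        u ^ ((d : ℝ) - 2) /
          ((u ^ 2 + h ^ 2) ^ (((d : ℝ) - 3 + 2 * lam) / 2) * (r ^ 2 - u ^ 2) ^ (1 - lam))
      = ((d : ℝ) + 2 * lam - 3) * Real.Gamma lam * Real.Gamma (((d : ℝ) - 1) / 2) /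
          (4 * Real.Gamma (((d : ℝ) + 2 * lam - 1) / 2)) *
          incBeta (r ^ 2 / (r ^ 2 + h ^ 2)) (((d : ℝ) + 2 * lam - 3) / 2) (1 - lam) := by
  have hd3 : (3:ℝ) ≤ (d:ℝ) := by exact_mod_cast hd
  set a : ℝ := ((d:ℝ) + 2 * lam - 3) / 2 with ha_def
  have ha : 0 < a := by rw [ha_def]; linarith
  have hb : 0 < a + 1 - lam := by rw [ha_def]; linarith
  have e_exp1 : ((d:ℝ) - 3 + 2 * lam) / 2 = a := by rw [ha_def]; ring
  have e_exp2 : ((d:ℝ) - 2) = 2*a - 2*lam + 1 := by rw [ha_def]; ring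
  have e_b : ((d:ℝ) - 1) / 2 = a + 1 - lam := by rw [ha_def]; ring
  have e_a1 : ((d:ℝ) + 2 * lam - 1) / 2 = a + 1 := by rw [ha_def]; ring
  have e_2a : ((d:ℝ) + 2 * lam - 3) = 2*a := by rw [ha_def]; ring
  rcases eq_or_lt_of_le hr0 with hr | hr
  · -- r = 0
    rw [← hr]
    simp [incBeta, intervalIntegral.integral_same]
  · -- 0 < r
    set Z : ℝ := r^2 / h^2 with hZ_def
    have hZ : 0 < Z := by positivity
    -- LHS
    have hL : (∫ u in (0:ℝ)..r,
        u ^ ((d : ℝ) - 2) /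
          ((u ^ 2 + h ^ 2) ^ (((d : ℝ) - 3 + 2 * lam) / 2) * (r ^ 2 - u ^ 2) ^ (1 - lam)))
        = 2⁻¹ * (r^2) ^ a * (h^2) ^ (-a) *
          ∫ v in Ioo (0:ℝ) 1, v ^ ((a+1-lam)-1) * (1-v) ^ (lam-1) * (1+Z*v) ^ (-a) := by
      rw [intervalIntegral.integral_of_le hr0, MeasureTheory.integral_Ioc_eq_integral_Ioo]
      simp only [e_exp1, e_exp2]
      exact lhsSub ha hl0 hl1 hh hr
    -- incBeta side
    have hz0 : r^2/(r^2+h^2) = Z/(1+Z) := by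
      rw [hZ_def]; field_simp; ring
    have hz0pos : 0 < Z/(1+Z) := by positivity
    have hR : incBeta (r ^ 2 / (r ^ 2 + h ^ 2)) a (1 - lam)
        = Z ^ a * ∫ v in Ioo (0:ℝ) 1, v ^ (a-1) * (1-v) ^ ((1:ℝ)-1) * (1+Z*v) ^ (-(a+1-lam)) := by
      rw [incBeta, hz0, intervalIntegral.integral_of_le hz0pos.le,
        MeasureTheory.integral_Ioc_eq_integral_Ioo]
      exact incBetaSub ha hZ
    -- symmetry
    have hsym := symmKernel (b := a+1-lam) (c := lam) (p := a) (q := 1) (Z := Z)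
      ha one_pos hb hl0 hZ.le (by ring)
    rw [betaOne ha, betaGamma hb hl0] at hsym
    have hbsum : (a + 1 - lam) + lam = a + 1 := by ring
    rw [hbsum] at hsym
    have hGa1 : 0 < Real.Gamma (a+1) := Real.Gamma_pos_of_pos (by linarith)
    have hGb : 0 < Real.Gamma (a+1-lam) := Real.Gamma_pos_of_pos hb
    have hGl : 0 < Real.Gamma lam := Real.Gamma_pos_of_pos hl0
    -- combine
    rw [hL, e_2a, e_b, e_a1, hR]
    have hI1 : (∫ v in Ioo (0:ℝ) 1, v ^ ((a+1-lam)-1) * (1-v) ^ (lam-1) * (1+Z*v) ^ (-a))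
        = a * (Real.Gamma (a+1-lam) * Real.Gamma lam / Real.Gamma (a+1)) *
          ∫ v in Ioo (0:ℝ) 1, v ^ (a-1) * (1-v) ^ ((1:ℝ)-1) * (1+Z*v) ^ (-(a+1-lam)) := by
      have h1a : (1:ℝ)/a ≠ 0 := by positivity
      have := congrArg (fun x => a * x) hsym
      rw [← mul_assoc, mul_one_div_cancel ha.ne', one_mul] at this
      rw [this]; ring
    rw [hI1]
    have hzpow : (r^2) ^ a * (h^2) ^ (-a) = Z ^ a := by
      rw [hZ_def, Real.div_rpow (by positivity) (by positivity), Real.rpow_neg (by positivity),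
        div_eq_mul_inv]
    rw [show (2⁻¹ * (r^2) ^ a * (h^2) ^ (-a)) = 2⁻¹ * ((r^2) ^ a * (h^2) ^ (-a)) by ring, hzpow]
    ring
end

section
/- Let $d \geq 3$, $0 < \lambda < 1$, and $h > 0$. Then $\int_0^1 \frac{(1-t^2)^{\lambda-1}}{h^2+t^2}\,t^{d-2}\,dt = \frac{\Gamma(\lambda)\,\Gamma((d-1)/2)}{2\,\Gamma((d+2\lambda-1)/2)}\cdot\frac{1}{1+h^2}\,{}_2F_1\!\left(1,\lambda;\frac{d+2\lambda-1}{2};\frac{1}{1+h^2}\right)$. -/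
open Real intervalIntegral

/-- The Pochhammer symbol `(a)_n = a (a+1) ⋯ (a+n-1)`. -/
noncomputable def poch (a : ℝ) (n : ℕ) : ℝ := ∏ i ∈ Finset.range n, (a + i)

/-- The Gauss hypergeometric function `₂F₁(a, b; c; z)` defined by its power series. -/
noncomputable def hyp2F1 (a b c z : ℝ) : ℝ :=
  ∑' n : ℕ, poch a n * poch b n / poch c n * z ^ n / (n.factorial : ℝ)

open MeasureTheory Set


lemma cpow_eq_real {x : ℝ} (hx : 0 < x) (r : ℝ) :
    (x : ℂ) ^ ((r : ℂ)) = ((x ^ r : ℝ) : ℂ) := by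
  rw [Complex.ofReal_cpow hx.le]

lemma beta_integrable {p q : ℝ} (hp : 0 < p) (hq : 0 < q) :
    IntegrableOn (fun t : ℝ => t ^ (p - 1) * (1 - t) ^ (q - 1)) (Ioo 0 1) := by
  have hc := Complex.betaIntegral_convergent (u := (p : ℂ)) (v := (q : ℂ)) (by simpa) (by simpa)
  have hc' : IntegrableOn (fun x : ℝ =>
      (x : ℂ) ^ ((p : ℂ) - 1) * ((1 : ℂ) - x) ^ ((q : ℂ) - 1)) (Ioo 0 1) := by
    have := (intervalIntegrable_iff_integrableOn_Ioo_of_le (by norm_num : (0:ℝ) ≤ 1)).mp hc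
    exact this
  have hn : IntegrableOn (fun x : ℝ =>
      ‖(x : ℂ) ^ ((p : ℂ) - 1) * ((1 : ℂ) - x) ^ ((q : ℂ) - 1)‖) (Ioo 0 1) := hc'.norm
  refine hn.congr_fun (fun x hx => ?_) measurableSet_Ioo
  have hx0 : 0 < x := hx.1
  have hx1 : 0 < 1 - x := by linarith [hx.2]
  have e3 : ((1 : ℂ) - (x:ℂ)) = ((1 - x : ℝ) : ℂ) := by push_cast; ring
  beta_reduce
  rw [norm_mul, e3,
    Complex.norm_cpow_eq_rpow_re_of_pos hx0, Complex.norm_cpow_eq_rpow_re_of_pos hx1]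
  norm_num

lemma beta_value {p q : ℝ} (hp : 0 < p) (hq : 0 < q) :
    ∫ t in Ioo (0:ℝ) 1, t ^ (p - 1) * (1 - t) ^ (q - 1)
      = Real.Gamma p * Real.Gamma q / Real.Gamma (p + q) := by
  have key := Complex.Gamma_mul_Gamma_eq_betaIntegral (s := (p : ℂ)) (t := (q : ℂ))
    (by simpa) (by simpa)
  have hbeta : Complex.betaIntegral p q
      = ((∫ t in Ioo (0:ℝ) 1, t ^ (p - 1) * (1 - t) ^ (q - 1) : ℝ) : ℂ) := by
    rw [Complex.betaIntegral, intervalIntegral.integral_of_le (by norm_num : (0:ℝ) ≤ 1),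
      MeasureTheory.integral_Ioc_eq_integral_Ioo]
    have hcongr : ∫ (x : ℝ) in Ioo (0:ℝ) 1, (x:ℂ) ^ ((p:ℂ) - 1) * (1 - (x:ℂ)) ^ ((q:ℂ) - 1)
        = ∫ (x : ℝ) in Ioo (0:ℝ) 1, ((x ^ (p - 1) * (1 - x) ^ (q - 1) : ℝ) : ℂ) := by
      refine MeasureTheory.setIntegral_congr_fun measurableSet_Ioo (fun x hx => ?_)
      have hx0 : 0 < x := hx.1
      have hx1 : 0 < 1 - x := by linarith [hx.2]
      have e1 : ((p : ℂ) - 1) = ((p - 1 : ℝ) : ℂ) := by push_cast; ring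
      have e2 : ((q : ℂ) - 1) = ((q - 1 : ℝ) : ℂ) := by push_cast; ring
      have e3 : ((1 : ℂ) - (x:ℂ)) = ((1 - x : ℝ) : ℂ) := by push_cast; ring
      simp only [e1, e2, e3, cpow_eq_real hx0, cpow_eq_real hx1]
      push_cast
      ring
    exact hcongr.trans _root_.integral_ofReal
  rw [hbeta, Complex.Gamma_ofReal, Complex.Gamma_ofReal, ← Complex.ofReal_add p q,
    Complex.Gamma_ofReal, ← Complex.ofReal_mul, ← Complex.ofReal_mul] at key
  have := Complex.ofReal_injective key
  have hG : Real.Gamma (p + q) ≠ 0 := (Real.Gamma_pos_of_pos (by linarith)).ne'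
  field_simp
  linarith [this]

lemma sq_image : (fun t : ℝ => t ^ 2) '' Ioo 0 1 = Ioo 0 1 := by
  ext u
  constructor
  · rintro ⟨t, ht, rfl⟩
    refine ⟨pow_pos ht.1 2, ?_⟩
    show t ^ 2 < 1
    nlinarith [ht.1, ht.2]
  · rintro ⟨hu0, hu1⟩
    exact ⟨Real.sqrt u, ⟨Real.sqrt_pos.mpr hu0, by
      rw [show (1:ℝ) = Real.sqrt 1 by simp]; exact Real.sqrt_lt_sqrt hu0.le hu1⟩,
      Real.sq_sqrt hu0.le⟩

lemma sq_deriv : ∀ x ∈ Ioo (0:ℝ) 1, HasDerivWithinAt (fun t : ℝ => t ^ 2) (2 * x) (Ioo 0 1) x := by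
  intro x _
  simpa using (hasDerivAt_pow 2 x).hasDerivWithinAt

lemma sq_injOn : Set.InjOn (fun t : ℝ => t ^ 2) (Ioo 0 1) := by
  intro a ha b hb hab
  simp only at hab
  nlinarith [ha.1, hb.1]

lemma abs_smul_eq {p q : ℝ} : ∀ x ∈ Ioo (0:ℝ) 1,
    |2 * x| • ((x ^ 2 : ℝ) ^ (p - 1) * (1 - x ^ 2) ^ (q - 1))
      = 2 * ((1 - x ^ 2) ^ (q - 1) * x ^ (2 * p - 1)) := by
  intro x hx
  have hx0 : (0:ℝ) < x := hx.1
  have e1 : ((x ^ 2 : ℝ)) ^ (p - 1) = x ^ (2 * p - 2) := by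
    rw [← Real.rpow_natCast x 2, ← Real.rpow_mul hx0.le]
    norm_num
    ring_nf
  have e2 : x ^ (2 * p - 2) * x = x ^ (2 * p - 1) := by
    nth_rewrite 2 [← Real.rpow_one x]
    rw [← Real.rpow_add hx0]
    ring_nf
  rw [abs_of_pos (by linarith), smul_eq_mul, e1]
  calc 2 * x * (x ^ (2*p-2) * (1 - x^2) ^ (q-1))
      = 2 * ((1 - x^2)^(q-1) * (x ^ (2*p-2) * x)) := by ring
    _ = 2 * ((1 - x^2)^(q-1) * x ^ (2*p-1)) := by rw [e2]

lemma beta_sq_value {p q : ℝ} (hp : 0 < p) (hq : 0 < q) :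
    ∫ t in Ioo (0:ℝ) 1, (1 - t ^ 2) ^ (q - 1) * t ^ (2 * p - 1)
      = Real.Gamma p * Real.Gamma q / Real.Gamma (p + q) / 2 := by
  have key : (∫ u in Ioo (0:ℝ) 1, u ^ (p - 1) * (1 - u) ^ (q - 1))
      = 2 * ∫ t in Ioo (0:ℝ) 1, (1 - t ^ 2) ^ (q - 1) * t ^ (2 * p - 1) := by
    conv_lhs => rw [← sq_image]
    rw [MeasureTheory.integral_image_eq_integral_abs_deriv_smul measurableSet_Ioo
        sq_deriv sq_injOn (fun u : ℝ => u ^ (p - 1) * (1 - u) ^ (q - 1)),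
      MeasureTheory.setIntegral_congr_fun measurableSet_Ioo (abs_smul_eq (p := p) (q := q)),
      MeasureTheory.integral_const_mul]
  rw [beta_value hp hq] at key
  linarith

lemma beta_sq_integrable {p q : ℝ} (hp : 0 < p) (hq : 0 < q) :
    IntegrableOn (fun t : ℝ => (1 - t ^ 2) ^ (q - 1) * t ^ (2 * p - 1)) (Ioo 0 1) := by
  have key := (MeasureTheory.integrableOn_image_iff_integrableOn_abs_deriv_smul
    measurableSet_Ioo sq_deriv sq_injOn
    (fun u : ℝ => u ^ (p - 1) * (1 - u) ^ (q - 1))).mp (by rw [sq_image]; exact beta_integrable hp hq)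
  have key2 : IntegrableOn
      (fun x : ℝ => 2 * ((1 - x ^ 2) ^ (q - 1) * x ^ (2 * p - 1))) (Ioo 0 1) :=
    key.congr_fun (abs_smul_eq (p := p) (q := q)) measurableSet_Ioo
  have key3 : IntegrableOn
      (fun x : ℝ => (1/2 : ℝ) * (2 * ((1 - x ^ 2) ^ (q - 1) * x ^ (2 * p - 1)))) (Ioo 0 1) :=
    key2.const_mul _
  exact key3.congr_fun (fun x _ => by ring) measurableSet_Ioo

lemma Gamma_poch {a : ℝ} (ha : 0 < a) (n : ℕ) :
    Real.Gamma (a + n) = Real.Gamma a * ∏ i ∈ Finset.range n, (a + i) := by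
  induction n with
  | zero => simp
  | succ n ih =>
    have : a + (n + 1 : ℕ) = (a + n) + 1 := by push_cast; ring
    rw [this, Real.Gamma_add_one (by positivity), ih, Finset.prod_range_succ]
    ring

lemma poch_pos {a : ℝ} (ha : 0 < a) (n : ℕ) : 0 < ∏ i ∈ Finset.range n, (a + i) := by
  exact Finset.prod_pos fun i _ => by positivity

lemma poch_mono {a c : ℝ} (ha : 0 < a) (hc : 0 ≤ c) (n : ℕ) :
    ∏ i ∈ Finset.range n, (a + i) ≤ ∏ i ∈ Finset.range n, (a + c + i) := by
  refine Finset.prod_le_prod (fun i _ => by positivity) (fun i _ => by linarith)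

lemma poch_one_eq (n : ℕ) : ∏ i ∈ Finset.range n, ((1:ℝ) + i) = n.factorial := by
  induction n with
  | zero => simp
  | succ n ih => rw [Finset.prod_range_succ, ih, Nat.factorial_succ]; push_cast; ring

theorem gamma_hypergeom_integral (d : ℕ) (lam h : ℝ) (hd : 3 ≤ d) (hl0 : 0 < lam)
    (hl1 : lam < 1) (hh : 0 < h) :
    ∫ t in (0:ℝ)..1, (1 - t ^ 2) ^ (lam - 1) / (h ^ 2 + t ^ 2) * t ^ ((d : ℝ) - 2)
      = Real.Gamma lam * Real.Gamma (((d : ℝ) - 1) / 2) /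
          (2 * Real.Gamma (((d : ℝ) + 2 * lam - 1) / 2)) * (1 / (1 + h ^ 2)) *
          hyp2F1 1 lam (((d : ℝ) + 2 * lam - 1) / 2) (1 / (1 + h ^ 2)) := by
  have hd3 : (3:ℝ) ≤ (d:ℝ) := by exact_mod_cast hd
  set c : ℝ := ((d:ℝ) - 1) / 2 with hc_def
  have hc : 0 < c := by rw [hc_def]; linarith
  set z : ℝ := 1 / (1 + h ^ 2) with hz_def
  have hden : (0:ℝ) < 1 + h ^ 2 := by positivity
  have hz0 : 0 < z := by rw [hz_def]; positivity
  have hz1 : z < 1 := by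
    rw [hz_def, div_lt_one hden]; nlinarith
  have hCc : ((d:ℝ) + 2 * lam - 1) / 2 = lam + c := by rw [hc_def]; ring
  set f : ℕ → ℝ → ℝ :=
    fun n t => z ^ (n+1) * ((1 - t ^ 2) ^ ((lam + n) - 1) * t ^ (2 * c - 1)) with hf_def
  have hlamn : ∀ n : ℕ, (0:ℝ) < lam + n := fun n => by positivity
  have hlc : 0 < lam + c := by linarith
  -- integrability of each term
  have hint : ∀ n : ℕ, IntegrableOn (f n) (Ioo 0 1) := fun n =>
    ((beta_sq_integrable hc (hlamn n)).const_mul _ : _)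
  -- value of each term
  have hval : ∀ n : ℕ, ∫ t in Ioo (0:ℝ) 1, f n t
      = (Real.Gamma lam * Real.Gamma c / (2 * Real.Gamma (lam + c)))
        * (poch lam n / poch (lam + c) n) * z ^ (n+1) := by
    intro n
    rw [hf_def]
    rw [MeasureTheory.integral_const_mul, beta_sq_value hc (hlamn n)]
    rw [show c + (lam + (n:ℝ)) = (lam + c) + (n:ℝ) by ring,
      Gamma_poch hl0 n, Gamma_poch hlc n]
    have h1 : Real.Gamma (lam + c) ≠ 0 := (Real.Gamma_pos_of_pos hlc).ne'
    have h2 : (∏ i ∈ Finset.range n, (lam + c + i)) ≠ 0 := (poch_pos hlc n).ne'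
    rw [poch, poch]
    field_simp
  -- nonnegativity on the set
  have hnn : ∀ n : ℕ, ∀ t ∈ Ioo (0:ℝ) 1, 0 ≤ f n t := by
    intro n t ht
    have h1 : (0:ℝ) ≤ 1 - t ^ 2 := by nlinarith [ht.1, ht.2]
    have h2 : (0:ℝ) ≤ t := ht.1.le
    rw [hf_def]
    positivity
  -- summability of the values
  set K : ℝ := Real.Gamma lam * Real.Gamma c / (2 * Real.Gamma (lam + c)) with hK_def
  have hK : 0 < K := by
    rw [hK_def]
    have := Real.Gamma_pos_of_pos hl0
    have := Real.Gamma_pos_of_pos hc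
    have := Real.Gamma_pos_of_pos hlc
    positivity
  have hratio : ∀ n : ℕ, 0 < poch lam n / poch (lam + c) n ∧
      poch lam n / poch (lam + c) n ≤ 1 := by
    intro n
    constructor
    · exact div_pos (poch_pos hl0 n) (poch_pos hlc n)
    · have hpos : (0:ℝ) < poch (lam + c) n := poch_pos hlc n
      rw [div_le_one hpos]
      exact poch_mono hl0 hc.le n
  have hsummable : Summable (fun n : ℕ =>
      K * (poch lam n / poch (lam + c) n) * z ^ (n+1)) := by
    refine Summable.of_nonneg_of_le (fun n => ?_) (fun n => ?_)
      (((summable_geometric_of_lt_one hz0.le hz1).mul_left (K * z)))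
    · have := (hratio n).1
      positivity
    · have h1 := (hratio n).2
      have h2 := (hratio n).1
      have : K * (poch lam n / poch (lam + c) n) * z ^ (n+1) ≤ K * 1 * z ^ (n+1) := by
        apply mul_le_mul_of_nonneg_right (mul_le_mul_of_nonneg_left h1 hK.le) (by positivity)
      calc K * (poch lam n / poch (lam + c) n) * z ^ (n+1) ≤ K * 1 * z ^ (n+1) := this
        _ = K * z * z ^ n := by ring
  -- measurability
  have hmeas : ∀ n : ℕ, AEStronglyMeasurable (f n) (volume.restrict (Ioo 0 1)) := by
    intro n
    rw [hf_def]
    apply Measurable.aestronglyMeasurable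
    fun_prop
  -- the lintegral bound
  have hlint : ∑' n : ℕ, ∫⁻ t, ‖f n t‖₊ ∂(volume.restrict (Ioo (0:ℝ) 1)) ≠ ⊤ := by
    have heq : ∀ n : ℕ, ∫⁻ t, ‖f n t‖₊ ∂(volume.restrict (Ioo (0:ℝ) 1))
        = ENNReal.ofReal (∫ t in Ioo (0:ℝ) 1, f n t) := by
      intro n
      have hae : 0 ≤ᵐ[volume.restrict (Ioo (0:ℝ) 1)] f n :=
        (MeasureTheory.ae_restrict_iff' measurableSet_Ioo).mpr
          (Filter.Eventually.of_forall (hnn n))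
      rw [MeasureTheory.ofReal_integral_eq_lintegral_ofReal (hint n) hae]
      refine MeasureTheory.lintegral_congr_ae (hae.mono fun t ht => ?_)
      exact Real.enorm_eq_ofReal ht
    simp_rw [heq, hval]
    rw [← ENNReal.ofReal_tsum_of_nonneg (fun n => by
        have := (hratio n).1; positivity) hsummable]
    exact ENNReal.ofReal_ne_top
  -- pointwise series expansion
  have hpt : ∀ t ∈ Ioo (0:ℝ) 1,
      (1 - t ^ 2) ^ (lam - 1) / (h ^ 2 + t ^ 2) * t ^ ((d : ℝ) - 2) = ∑' n : ℕ, f n t := by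
    intro t ht
    have ht0 : 0 < t := ht.1
    have ht2 : 0 < 1 - t ^ 2 := by nlinarith [ht.1, ht.2]
    have hr0 : 0 ≤ z * (1 - t ^ 2) := by positivity
    have hr1 : z * (1 - t ^ 2) < 1 := by
      rw [hz_def]
      rw [div_mul_eq_mul_div, div_lt_one hden]
      nlinarith
    have hterm : ∀ n : ℕ, f n t
        = ((1 - t ^ 2) ^ (lam - 1) * t ^ (2 * c - 1) * z) * (z * (1 - t ^ 2)) ^ n := by
      intro n
      simp only [hf_def]
      rw [show (lam + (n:ℝ)) - 1 = (lam - 1) + (n:ℝ) by ring, Real.rpow_add ht2,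
        Real.rpow_natCast, mul_pow]
      ring
    rw [tsum_congr hterm, tsum_mul_left, tsum_geometric_of_lt_one hr0 hr1]
    have hkey : 1 - z * (1 - t ^ 2) = z * (h ^ 2 + t ^ 2) := by
      rw [hz_def]; field_simp; ring
    rw [hkey, mul_inv]
    rw [show (2:ℝ) * c - 1 = (d:ℝ) - 2 by rw [hc_def]; ring]
    have hht : (0:ℝ) < h ^ 2 + t ^ 2 := by positivity
    field_simp
  -- put it together
  rw [intervalIntegral.integral_of_le zero_le_one, MeasureTheory.integral_Ioc_eq_integral_Ioo,
    MeasureTheory.setIntegral_congr_fun measurableSet_Ioo hpt,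
    MeasureTheory.integral_tsum hmeas hlint]
  simp_rw [hval]
  -- compute the RHS
  rw [hCc]
  have hhyp : hyp2F1 1 lam (lam + c) z
      = ∑' n : ℕ, (poch lam n / poch (lam + c) n) * z ^ n := by
    rw [hyp2F1]
    refine tsum_congr fun n => ?_
    have : poch 1 n = n.factorial := by rw [poch]; exact poch_one_eq n
    rw [this]
    have h2 : (poch (lam + c) n) ≠ 0 := (poch_pos hlc n).ne'
    have h3 : (n.factorial : ℝ) ≠ 0 := by positivity
    field_simp
  rw [hhyp]
  have : (∑' n : ℕ, K * (poch lam n / poch (lam + c) n) * z ^ (n+1))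
      = (K * z) * ∑' n : ℕ, (poch lam n / poch (lam + c) n) * z ^ n := by
    rw [← tsum_mul_left]
    refine tsum_congr fun n => ?_
    ring
  rw [this, hK_def]
end

section
/- For $0 < \lambda < 1$, $0 \leq t \leq a \leq \rho$ with $t < a < \rho$: $\int_a^\rho \frac{u\,du}{(\rho^2-u^2)^{1-\lambda}\,(u^2-t^2)^\lambda} = \frac{1}{2\lambda}\left(\frac{\rho^2-a^2}{\rho^2-t^2}\right)^\lambda {}_2F_1\!\left(\lambda,\lambda;\lambda+1;\frac{\rho^2-a^2}{\rho^2-t^2}\right)$. -/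
open Real intervalIntegral

open MeasureTheory

lemma poch_zero (a : ℝ) : poch a 0 = 1 := Finset.prod_range_zero _

lemma poch_succ (a : ℝ) (n : ℕ) : poch a (n + 1) = poch a n * (a + n) :=
  Finset.prod_range_succ _ _

lemma poch_pos_s8 {a : ℝ} (ha : 0 < a) (n : ℕ) : 0 < poch a n := by
  induction n with
  | zero => simp [poch_zero]
  | succ n ih =>
      rw [poch_succ]
      have : (0:ℝ) < a + n := by positivity
      positivity

lemma poch_le_factorial {a : ℝ} (ha0 : 0 < a) (ha1 : a ≤ 1) (n : ℕ) :
    poch a n ≤ n.factorial := by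
  induction n with
  | zero => simp [poch_zero]
  | succ n ih =>
      rw [poch_succ, Nat.factorial_succ]
      push_cast
      have h1 : a + n ≤ n + 1 := by linarith
      have h2 : (0:ℝ) < a + n := by positivity
      have h3 : (0:ℝ) ≤ (n.factorial : ℝ) := by positivity
      have h4 := mul_le_mul ih h1 h2.le h3
      linarith

lemma poch_shift (a : ℝ) (n : ℕ) : poch (a + 1) n * a = poch a n * (a + n) := by
  induction n with
  | zero => simp [poch_zero]
  | succ n ih =>
      rw [poch_succ, poch_succ]
      push_cast
      linear_combination (a + 1 + (n:ℝ)) * ih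

lemma summable_aux {d : ℕ → ℝ} {M y : ℝ} (hd : ∀ n, |d n| ≤ M) (hy : |y| < 1) :
    Summable fun n => d n * y ^ n := by
  refine Summable.of_norm_bounded
    ((summable_geometric_of_lt_one (abs_nonneg y) hy).mul_left M) (fun n => ?_)
  rw [norm_mul, norm_pow, Real.norm_eq_abs, Real.norm_eq_abs]
  exact mul_le_mul_of_nonneg_right (hd n) (by positivity)

lemma summable_deriv_aux {M r : ℝ} (hr0 : 0 ≤ r) (hr : r < 1) :
    Summable fun n : ℕ => M * ((n : ℝ) * r ^ (n - 1)) := by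
  have h1 : Summable fun n : ℕ => (n : ℝ) * r ^ n := by
    simpa using summable_pow_mul_geometric_of_norm_lt_one (R := ℝ) 1
      (r := r) (by rwa [Real.norm_eq_abs, abs_of_nonneg hr0])
  have h2 : Summable fun n : ℕ => ((n : ℝ) + 1) * r ^ n := by
    simpa [add_mul, one_mul] using h1.add (summable_geometric_of_lt_one hr0 hr)
  have h3 : Summable fun n : ℕ => (((n+1) : ℕ) : ℝ) * r ^ ((n + 1) - 1) := by
    simpa [Nat.add_sub_cancel] using h2
  exact ((summable_nat_add_iff (f := fun n : ℕ => (n : ℝ) * r ^ (n - 1)) 1).mp h3).mul_left M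

lemma hasDerivAt_series {d : ℕ → ℝ} {M y : ℝ} (hd : ∀ n, |d n| ≤ M) (hy : |y| < 1) :
    HasDerivAt (fun w => ∑' n, d n * w ^ n) (∑' n, d n * ((n : ℝ) * y ^ (n - 1))) y := by
  set r : ℝ := (1 + |y|) / 2 with hrdef
  have hyr : |y| < r := by rw [hrdef]; linarith
  have hr1 : r < 1 := by rw [hrdef]; linarith
  have hr0 : (0:ℝ) ≤ r := le_trans (abs_nonneg y) hyr.le
  refine hasDerivAt_tsum_of_isPreconnected (u := fun n : ℕ => M * ((n:ℝ) * r ^ (n - 1)))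
    (F := ℝ) (g := fun n w => d n * w ^ n) (g' := fun n w => d n * ((n:ℝ) * w ^ (n - 1)))
    (y₀ := 0) (summable_deriv_aux hr0 hr1) isOpen_Ioo
    (convex_Ioo (-r) r).isPreconnected
    (fun n w _ => (hasDerivAt_pow n w).const_mul (d n)) ?_ ?_ ?_ ?_
  · intro n w hw
    have hwr : |w| ≤ r := (abs_lt.2 hw).le
    rw [Real.norm_eq_abs, abs_mul, abs_mul, Nat.abs_cast, abs_pow]
    have hM : 0 ≤ M := le_trans (abs_nonneg _) (hd 0)
    have hp : |w| ^ (n - 1) ≤ r ^ (n - 1) := pow_le_pow_left₀ (abs_nonneg w) hwr _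
    exact mul_le_mul (hd n) (mul_le_mul_of_nonneg_left hp (Nat.cast_nonneg n))
      (by positivity) hM
  · constructor <;> [linarith [hyr, abs_nonneg y]; linarith [hyr, abs_nonneg y]]
  · exact summable_aux hd (by simp)
  · exact abs_lt.1 hyr


section Binom
variable {lam : ℝ}

lemma coeff_bound (hl0 : 0 < lam) (hl1 : lam ≤ 1) (n : ℕ) :
    |poch lam n / n.factorial| ≤ 1 := by
  have h1 : (0:ℝ) < n.factorial := by positivity
  rw [abs_of_nonneg (div_nonneg (poch_pos_s8 hl0 n).le h1.le)]
  rw [div_le_one h1]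
  exact poch_le_factorial hl0 hl1 n

lemma coeff_succ (hl0 : 0 < lam) (n : ℕ) :
    poch lam (n+1) / (n+1).factorial * ((n:ℝ) + 1) = poch lam n / n.factorial * (lam + n) := by
  have h1 : (0:ℝ) < n.factorial := by positivity
  rw [poch_succ, Nat.factorial_succ]
  push_cast
  field_simp

/-- The key ODE identity `(1-w) B'(w) = lam * B(w)` in the form
`B'(w) = lam * B(w) + w * B'(w)`. -/
lemma deriv_series_eq (hl0 : 0 < lam) (hl1 : lam ≤ 1) {w : ℝ} (hw : |w| < 1) :
    (∑' n : ℕ, poch lam n / n.factorial * ((n:ℝ) * w ^ (n - 1)))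
      = lam * (∑' n : ℕ, poch lam n / n.factorial * w ^ n)
        + (∑' n : ℕ, poch lam n / n.factorial * ((n:ℝ) * w ^ (n - 1))) * w := by
  set c : ℕ → ℝ := fun n => poch lam n / n.factorial with hc
  have hcb : ∀ n, |c n| ≤ 1 := coeff_bound hl0 hl1
  have S1 : Summable fun n => c n * ((n:ℝ) * w ^ (n - 1)) := by
    refine Summable.of_norm_bounded (summable_deriv_aux (M := 1) (abs_nonneg w) hw)
      (fun n => ?_)
    rw [Real.norm_eq_abs, abs_mul, abs_mul, Nat.abs_cast, abs_pow]
    exact mul_le_mul (hcb n) le_rfl (by positivity) zero_le_one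
  have SB : Summable fun n => c n * w ^ n := summable_aux hcb hw
  have S2 : Summable fun n => lam * (c n * w ^ n) := SB.mul_left lam
  have S3 : Summable fun n => c n * ((n:ℝ) * w ^ (n - 1)) * w := S1.mul_right w
  rw [← tsum_mul_left, ← tsum_mul_right, ← Summable.tsum_add S2 S3]
  rw [Summable.tsum_eq_zero_add S1]
  simp only [Nat.cast_zero, zero_mul, mul_zero, zero_add, Nat.cast_add, Nat.cast_one,
    Nat.add_sub_cancel]
  refine tsum_congr fun n => ?_
  have key : c (n+1) * ((n:ℝ) + 1) = c n * (lam + n) := coeff_succ hl0 n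
  rcases n with _ | m
  · simp only [Nat.cast_zero, zero_mul, mul_zero, zero_add, pow_zero, mul_one, add_zero] at key ⊢
    linarith [key]
  · have hpow : w ^ (m + 1 - 1) * w = w ^ (m + 1) := by
      rw [Nat.add_sub_cancel, pow_succ]
    push_cast
    calc c (m + 1 + 1) * (((m:ℝ) + 1 + 1) * w ^ (m + 1))
        = (c (m + 1 + 1) * ((m:ℝ) + 1 + 1)) * w ^ (m + 1) := by ring
      _ = (c (m + 1) * (lam + ((m:ℝ) + 1))) * w ^ (m + 1) := by
          rw [show ((m:ℝ) + 1 + 1) = ((m+1:ℕ):ℝ) + 1 by push_cast; ring]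
          rw [coeff_succ hl0 (m+1)]; push_cast; ring
      _ = lam * (c (m + 1) * w ^ (m + 1))
            + c (m + 1) * (((m:ℝ) + 1) * w ^ (m + 1 - 1)) * w := by
          rw [mul_comm (c (m+1) * (((m:ℝ)+1) * w ^ (m + 1 - 1))) w, ← mul_assoc]
          rw [show w * (c (m+1) * (((m:ℝ)+1) * w ^ (m+1-1))) = c (m+1) * (((m:ℝ)+1) * (w ^ (m+1-1) * w)) by ring]
          rw [hpow]; ring
end Binom

lemma binomial_hasDerivAt_zero (hl0 : 0 < lam) (hl1 : lam ≤ 1) {w : ℝ} (hw : |w| < 1) :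
    HasDerivAt (fun v => (∑' n : ℕ, poch lam n / n.factorial * v ^ n) * (1 - v) ^ lam)
      0 w := by
  have hcb : ∀ n, |poch lam n / n.factorial| ≤ 1 := coeff_bound hl0 hl1
  have h1w : (0:ℝ) < 1 - w := by
    have := abs_lt.1 hw; linarith [this.2]
  have hB := hasDerivAt_series hcb hw
  have hpow : HasDerivAt (fun v : ℝ => (1 - v) ^ lam)
      (lam * (1 - w) ^ (lam - 1) * (0 - 1)) w := by
    have h := Real.hasDerivAt_rpow_const (x := 1 - w) (p := lam) (Or.inl h1w.ne')
    exact h.comp w ((hasDerivAt_const w (1:ℝ)).sub (hasDerivAt_id w)) |>.congr_deriv (by ring)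
  have hmul := hB.mul hpow
  have key := deriv_series_eq hl0 hl1 hw
  refine hmul.congr_deriv ?_
  symm
  have hrw : (1 - w) ^ lam = (1 - w) ^ (lam - 1) * (1 - w) := by
    rw [← Real.rpow_add_one h1w.ne' (lam - 1)]; ring_nf
  rw [hrw]
  set B' := ∑' n : ℕ, poch lam n / n.factorial * ((n:ℝ) * w ^ (n - 1))
  set B := ∑' n : ℕ, poch lam n / n.factorial * w ^ n
  have h2 : B' - B' * w = lam * B := by linarith [key]
  linear_combination (-(1 - w) ^ (lam - 1)) * h2

lemma binomial_series (hl0 : 0 < lam) (hl1 : lam ≤ 1) {y : ℝ} (hy0 : 0 ≤ y) (hy1 : y < 1) :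
    ∑' n : ℕ, poch lam n / n.factorial * y ^ n = (1 - y) ^ (-lam) := by
  set f : ℝ → ℝ := fun v => (∑' n : ℕ, poch lam n / n.factorial * v ^ n) * (1 - v) ^ lam
    with hf
  have habs : ∀ x ∈ Set.Icc (0:ℝ) y, |x| < 1 := by
    intro x hx
    rw [abs_of_nonneg hx.1]
    exact lt_of_le_of_lt hx.2 hy1
  have hcont : ContinuousOn f (Set.Icc 0 y) := fun x hx =>
    ((binomial_hasDerivAt_zero hl0 hl1 (habs x hx)).continuousAt).continuousWithinAt
  have hderiv : ∀ x ∈ Set.Ico (0:ℝ) y, HasDerivWithinAt f 0 (Set.Ici x) x := fun x hx =>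
    (binomial_hasDerivAt_zero hl0 hl1 (habs x ⟨hx.1, hx.2.le⟩)).hasDerivWithinAt
  have hconst := constant_of_has_deriv_right_zero hcont hderiv y (Set.right_mem_Icc.2 hy0)
  have hf0 : f 0 = 1 := by
    rw [hf]
    simp only [sub_zero, Real.one_rpow, mul_one]
    rw [tsum_eq_single 0 (by intro n hn; simp [zero_pow hn])]
    simp [poch_zero]
  rw [hf0] at hconst
  have h1y : (0:ℝ) < 1 - y := by linarith
  have hpos : (0:ℝ) < (1 - y) ^ lam := Real.rpow_pos_of_pos h1y lam
  rw [Real.rpow_neg h1y.le]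
  exact eq_inv_of_mul_eq_one_left hconst

lemma ecoeff_bound (hl0 : 0 < lam) (hl1 : lam ≤ 1) (n : ℕ) :
    |poch lam n / n.factorial / (lam + n)| ≤ 1 / lam := by
  have hln : (0:ℝ) < lam + n := by positivity
  have h1 : (0:ℝ) < n.factorial := by positivity
  rw [abs_of_nonneg (div_nonneg (div_nonneg (poch_pos_s8 hl0 n).le h1.le) hln.le)]
  have h2 : poch lam n / n.factorial ≤ 1 := by
    rw [div_le_one h1]; exact poch_le_factorial hl0 hl1 n
  calc poch lam n / n.factorial / (lam + n) ≤ 1 / (lam + n) := by gcongr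
    _ ≤ 1 / lam := by
        apply one_div_le_one_div_of_le hl0; linarith

lemma ecoeff_mul (hl0 : 0 < lam) (n : ℕ) :
    poch lam n / n.factorial / (lam + n) * (lam + n) = poch lam n / n.factorial := by
  have hln : (0:ℝ) < lam + n := by positivity
  field_simp

lemma hasDerivAt_G (hl0 : 0 < lam) (hl1 : lam ≤ 1) {y : ℝ} (hy0 : 0 < y) (hy1 : y < 1) :
    HasDerivAt (fun w => w ^ lam * ∑' n : ℕ, poch lam n / n.factorial / (lam + n) * w ^ n)
      (y ^ (lam - 1) * (1 - y) ^ (-lam)) y := by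
  set e : ℕ → ℝ := fun n => poch lam n / n.factorial / (lam + n) with he
  have heb : ∀ n, |e n| ≤ 1 / lam := ecoeff_bound hl0 hl1
  have hyabs : |y| < 1 := by rw [abs_of_nonneg hy0.le]; exact hy1
  have hP := hasDerivAt_series heb hyabs
  have hpow : HasDerivAt (fun w : ℝ => w ^ lam) (lam * y ^ (lam - 1)) y :=
    Real.hasDerivAt_rpow_const (Or.inl hy0.ne')
  have hmul := hpow.mul hP
  refine hmul.congr_deriv ?_
  symm
  rw [← binomial_series hl0 hl1 hy0.le hy1]
  have hylam : y ^ lam = y ^ (lam - 1) * y := by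
    rw [← Real.rpow_add_one hy0.ne' (lam - 1)]; ring_nf
  rw [hylam]
  have hSe : Summable fun n => e n * y ^ n := summable_aux heb hyabs
  have hS1 : Summable fun n => e n * ((n:ℝ) * y ^ (n - 1)) := by
    refine Summable.of_norm_bounded (summable_deriv_aux (M := 1/lam) (abs_nonneg y) hyabs)
      (fun n => ?_)
    rw [Real.norm_eq_abs, abs_mul, abs_mul, Nat.abs_cast, abs_pow]
    exact mul_le_mul (heb n) (mul_le_mul_of_nonneg_left
      (pow_le_pow_left₀ (abs_nonneg y) (le_of_eq rfl) _) (Nat.cast_nonneg n))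
      (by positivity) (by positivity)
  have key : (∑' n : ℕ, poch lam n / n.factorial * y ^ n)
      = lam * (∑' n, e n * y ^ n) + y * (∑' n, e n * ((n:ℝ) * y ^ (n - 1))) := by
    rw [← tsum_mul_left, ← tsum_mul_left, ← Summable.tsum_add (hSe.mul_left lam) (hS1.mul_left y)]
    refine tsum_congr fun n => ?_
    have hln : (0:ℝ) < lam + n := by positivity
    rcases n with _ | m
    · simp only [Nat.cast_zero, zero_mul, mul_zero, add_zero, pow_zero, mul_one]
      rw [he]
      simp only [Nat.cast_zero, add_zero]
      field_simp
    · have hpowm : y * y ^ (m + 1 - 1) = y ^ (m + 1) := by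
        rw [Nat.add_sub_cancel, pow_succ]; ring
      have hec := ecoeff_mul hl0 (m + 1)
      calc poch lam (m+1) / (m+1).factorial * y ^ (m+1)
          = (e (m+1) * (lam + ((m:ℝ)+1))) * y ^ (m+1) := by rw [he]; push_cast at hec ⊢; rw [hec]
        _ = lam * (e (m+1) * y ^ (m+1)) + e (m+1) * (((m:ℝ)+1) * y ^ (m+1)) := by ring
        _ = lam * (e (m+1) * y ^ (m+1)) + y * (e (m+1) * ((((m+1:ℕ)):ℝ) * y ^ (m+1-1))) := by
            rw [show y * (e (m+1) * ((((m+1:ℕ)):ℝ) * y ^ (m+1-1)))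
                = e (m+1) * ((((m+1:ℕ)):ℝ) * (y * y ^ (m+1-1))) by ring, hpowm]
            push_cast; ring
  rw [key]
  ring


set_option maxHeartbeats 1600000 in
theorem ring_abel_integral (lam t a ρ : ℝ) (hl0 : 0 < lam) (hl1 : lam < 1)
    (ht0 : 0 ≤ t) (hta : t < a) (haρ : a < ρ) :
    ∫ u in a..ρ, u / ((ρ ^ 2 - u ^ 2) ^ (1 - lam) * (u ^ 2 - t ^ 2) ^ lam)
      = 1 / (2 * lam) * ((ρ ^ 2 - a ^ 2) / (ρ ^ 2 - t ^ 2)) ^ lam *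
          hyp2F1 lam lam (lam + 1) ((ρ ^ 2 - a ^ 2) / (ρ ^ 2 - t ^ 2)) := by
  have ha0 : 0 < a := lt_of_le_of_lt ht0 hta
  have hρ0 : 0 < ρ := lt_trans ha0 haρ
  set D : ℝ := ρ ^ 2 - t ^ 2 with hD
  set X : ℝ := ρ ^ 2 - a ^ 2 with hX
  have hX0 : 0 < X := by rw [hX]; nlinarith
  have hXD : X < D := by rw [hX, hD]; nlinarith
  have hD0 : 0 < D := lt_trans hX0 hXD
  set z : ℝ := X / D with hz
  have hz0 : 0 < z := div_pos hX0 hD0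
  have hz1 : z < 1 := (div_lt_one hD0).2 hXD
  set e : ℕ → ℝ := fun n => poch lam n / n.factorial / (lam + n) with he
  set G : ℝ → ℝ := fun w => w ^ lam * ∑' n : ℕ, e n * w ^ n with hG
  set q : ℝ → ℝ := fun u => (ρ ^ 2 - u ^ 2) / D with hq
  set H : ℝ → ℝ := fun u => -(1/2) * G (q u) with hH
  have heb : ∀ n, |e n| ≤ 1 / lam := ecoeff_bound hl0 hl1.le
  -- bounds for q on the interval
  have hqz : ∀ u ∈ Set.Icc a ρ, q u ∈ Set.Icc 0 z := by
    intro u hu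
    obtain ⟨hau, huρ⟩ := hu
    constructor
    · apply div_nonneg _ hD0.le; nlinarith
    · rw [hz, div_le_div_iff_of_pos_right hD0, hX]; nlinarith
  have hqo : ∀ u ∈ Set.Ioo a ρ, q u ∈ Set.Ioo 0 1 := by
    intro u hu
    obtain ⟨hau, huρ⟩ := hu
    constructor
    · apply div_pos _ hD0; nlinarith
    · rw [div_lt_one hD0, hD]; nlinarith
  -- continuity of H on [a, ρ]
  have hGcont : ContinuousOn G (Set.Icc 0 z) := by
    intro w hw
    have hwabs : |w| < 1 := by
      rw [abs_of_nonneg hw.1]; exact lt_of_le_of_lt hw.2 hz1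
    apply ContinuousWithinAt.mul
    · exact (Real.continuousAt_rpow_const w lam (Or.inr hl0.le)).continuousWithinAt
    · exact ((hasDerivAt_series heb hwabs).continuousAt).continuousWithinAt
  have hqcont : Continuous q := by
    apply Continuous.div_const
    exact (continuous_const.sub (continuous_pow 2))
  have hHcont : ContinuousOn H (Set.Icc a ρ) := by
    have h1 : ContinuousOn (fun u => G (q u)) (Set.Icc a ρ) :=
      hGcont.comp hqcont.continuousOn hqz
    exact continuousOn_const.mul h1
  -- derivative of H on (a, ρ)
  have hHderiv : ∀ u ∈ Set.Ioo a ρ, HasDerivAt H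
      (u / ((ρ ^ 2 - u ^ 2) ^ (1 - lam) * (u ^ 2 - t ^ 2) ^ lam)) u := by
    intro u hu
    obtain ⟨hq0, hq1⟩ := hqo u hu
    have hqd : HasDerivAt q (-(2 * u) / D) u := by
      have h1 : HasDerivAt (fun v : ℝ => ρ ^ 2 - v ^ 2) (-(2 * u)) u := by
        have := (hasDerivAt_pow 2 u).const_sub (ρ ^ 2)
        exact this.congr_deriv (by norm_num)
      exact h1.div_const D
    have hGd := (hasDerivAt_G hl0 hl1.le hq0 hq1).comp u hqd
    have hHd := hGd.const_mul (-(1/2) : ℝ)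
    refine hHd.congr_deriv ?_
    symm
    -- value computation
    set A : ℝ := ρ ^ 2 - u ^ 2 with hA
    set C : ℝ := u ^ 2 - t ^ 2 with hC
    have hA0 : 0 < A := by rw [hA]; nlinarith [hu.1, hu.2]
    have hC0 : 0 < C := by rw [hC]; nlinarith [hu.1, hu.2]
    have hqA : q u = A / D := rfl
    have h1q : 1 - q u = C / D := by
      rw [hqA]; field_simp; rw [hD, hA, hC]; ring
    rw [hqA, h1q]
    rw [Real.div_rpow hA0.le hD0.le, Real.div_rpow hC0.le hD0.le]
    have e1 : A ^ (1 - lam) * A ^ (lam - 1) = 1 := by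
      rw [← Real.rpow_add hA0]; norm_num
    have e2 : C ^ lam * C ^ (-lam) = 1 := by
      rw [← Real.rpow_add hC0]; norm_num
    have e3 : D ^ (lam - 1) * D ^ (-lam) * D = 1 := by
      rw [← Real.rpow_add hD0, show lam - 1 + -lam = -1 by ring, Real.rpow_neg_one]
      field_simp
    have key : A ^ (lam-1) / D ^ (lam-1) * (C ^ (-lam) / D ^ (-lam)) * (-(2*u) / D)
        = -(2*u) * (A ^ (lam-1) * C ^ (-lam)) := by
      rw [div_mul_div_comm, div_mul_div_comm]
      rw [show D ^ (lam-1) * D ^ (-lam) * D = 1 from e3, div_one]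
      ring
    rw [key]
    have e1' : A ^ (lam - 1) = (A ^ (1 - lam))⁻¹ := by
      rw [show lam - 1 = -(1 - lam) by ring, Real.rpow_neg hA0.le]
    have e2' : C ^ (-lam) = (C ^ lam)⁻¹ := Real.rpow_neg hC0.le lam
    rw [e1', e2', div_eq_mul_inv, mul_inv]
    ring
  -- integrability
  have hint : IntervalIntegrable
      (fun u => u / ((ρ ^ 2 - u ^ 2) ^ (1 - lam) * (u ^ 2 - t ^ 2) ^ lam)) volume a ρ := by
    set K : ℝ := ρ / ((ρ + a) ^ (1 - lam) * (a ^ 2 - t ^ 2) ^ lam) with hK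
    have hat2 : (0:ℝ) < a ^ 2 - t ^ 2 := by nlinarith
    have hρa : (0:ℝ) < ρ + a := by linarith
    have hK0 : 0 < K :=
      div_pos hρ0 (mul_pos (Real.rpow_pos_of_pos hρa _) (Real.rpow_pos_of_pos hat2 _))
    have hbase : IntervalIntegrable (fun x : ℝ => x ^ (lam - 1)) volume (ρ - a) (ρ - ρ) :=
      intervalIntegrable_rpow' (by linarith)
    have hg : IntervalIntegrable (fun x : ℝ => (ρ - x) ^ (lam - 1)) volume a ρ := by
      have h2 := hbase.comp_sub_left ρ
      simpa using h2
    have hg' := hg.const_mul K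
    refine hg'.mono_fun ?_ ?_
    · apply Measurable.aestronglyMeasurable
      apply Measurable.div measurable_id
      have inner1 : Continuous fun u : ℝ => ρ ^ 2 - u ^ 2 := by fun_prop
      have inner2 : Continuous fun u : ℝ => u ^ 2 - t ^ 2 := by fun_prop
      have cont1 : Continuous fun u : ℝ => (ρ ^ 2 - u ^ 2) ^ (1 - lam) :=
        continuous_iff_continuousAt.2 fun u =>
          (Real.continuousAt_rpow_const _ _ (Or.inr (by linarith))).comp inner1.continuousAt
      have cont2 : Continuous fun u : ℝ => (u ^ 2 - t ^ 2) ^ lam :=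
        continuous_iff_continuousAt.2 fun u =>
          (Real.continuousAt_rpow_const _ _ (Or.inr hl0.le)).comp inner2.continuousAt
      exact (cont1.mul cont2).measurable
    · rw [Set.uIoc_of_le haρ.le]
      filter_upwards [ae_restrict_mem measurableSet_Ioc] with x hx
      obtain ⟨hax, hxρ⟩ := hx
      have hx0 : 0 < x := lt_trans ha0 hax
      have hA0 : (0:ℝ) ≤ ρ ^ 2 - x ^ 2 := by nlinarith
      have hC0 : (0:ℝ) < x ^ 2 - t ^ 2 := by nlinarith
      have hf_nonneg : 0 ≤ x / ((ρ ^ 2 - x ^ 2) ^ (1 - lam) * (x ^ 2 - t ^ 2) ^ lam) :=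
        div_nonneg hx0.le (mul_nonneg (Real.rpow_nonneg hA0 _) (Real.rpow_nonneg hC0.le _))
      have hg_nonneg : 0 ≤ K * (ρ - x) ^ (lam - 1) :=
        mul_nonneg hK0.le (Real.rpow_nonneg (by linarith) _)
      rw [Real.norm_eq_abs, Real.norm_eq_abs, abs_of_nonneg hf_nonneg, abs_of_nonneg hg_nonneg]
      rcases eq_or_lt_of_le hxρ with heq | hlt
      · rw [show ρ ^ 2 - x ^ 2 = 0 by rw [heq]; ring,
          Real.zero_rpow (by linarith : 1 - lam ≠ 0), zero_mul, div_zero]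
        exact hg_nonneg
      · have hρx : (0:ℝ) < ρ - x := by linarith
        have hfact : (ρ ^ 2 - x ^ 2) ^ (1 - lam)
            = (ρ - x) ^ (1 - lam) * (ρ + x) ^ (1 - lam) := by
          rw [← Real.mul_rpow hρx.le (by linarith : (0:ℝ) ≤ ρ + x)]
          ring_nf
        have hd1 : (ρ + a) ^ (1 - lam) ≤ (ρ + x) ^ (1 - lam) :=
          Real.rpow_le_rpow hρa.le (by linarith) (by linarith)
        have hd2 : (a ^ 2 - t ^ 2) ^ lam ≤ (x ^ 2 - t ^ 2) ^ lam :=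
          Real.rpow_le_rpow hat2.le (by nlinarith) hl0.le
        have hsmall : (0:ℝ) < (ρ - x) ^ (1 - lam) * ((ρ + a) ^ (1 - lam) * (a ^ 2 - t ^ 2) ^ lam) :=
          mul_pos (Real.rpow_pos_of_pos hρx _)
            (mul_pos (Real.rpow_pos_of_pos hρa _) (Real.rpow_pos_of_pos hat2 _))
        have hbig : (ρ - x) ^ (1 - lam) * ((ρ + a) ^ (1 - lam) * (a ^ 2 - t ^ 2) ^ lam)
            ≤ (ρ ^ 2 - x ^ 2) ^ (1 - lam) * (x ^ 2 - t ^ 2) ^ lam := by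
          rw [hfact]
          calc (ρ - x) ^ (1 - lam) * ((ρ + a) ^ (1 - lam) * (a ^ 2 - t ^ 2) ^ lam)
              ≤ (ρ - x) ^ (1 - lam) * ((ρ + x) ^ (1 - lam) * (x ^ 2 - t ^ 2) ^ lam) := by
                apply mul_le_mul_of_nonneg_left _ (Real.rpow_nonneg hρx.le _)
                exact mul_le_mul hd1 hd2 (Real.rpow_nonneg hat2.le _) (Real.rpow_nonneg (by linarith) _)
            _ = (ρ - x) ^ (1 - lam) * (ρ + x) ^ (1 - lam) * (x ^ 2 - t ^ 2) ^ lam := by ring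
        have step1 : x / ((ρ ^ 2 - x ^ 2) ^ (1 - lam) * (x ^ 2 - t ^ 2) ^ lam)
            ≤ ρ / ((ρ - x) ^ (1 - lam) * ((ρ + a) ^ (1 - lam) * (a ^ 2 - t ^ 2) ^ lam)) :=
          div_le_div₀ hρ0.le hxρ hsmall hbig
        refine step1.trans (le_of_eq ?_)
        rw [hK, show (lam - 1) = -(1 - lam) by ring, Real.rpow_neg hρx.le]
        field_simp
  -- FTC
  have hftc := integral_eq_sub_of_hasDeriv_right_of_le haρ.le hHcont
    (fun u hu => (hHderiv u hu).hasDerivWithinAt) hint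
  rw [hftc]
  have hqρ : q ρ = 0 := by rw [hq]; simp
  have hqa : q a = z := by rw [hq, hz, hX]
  have hG0 : G 0 = 0 := by
    rw [hG]; simp [Real.zero_rpow hl0.ne']
  rw [hH]
  simp only [hqρ, hqa, hG0, mul_zero, zero_sub, neg_neg]
  -- identify with hyp2F1
  have hyp_eq : hyp2F1 lam lam (lam + 1) z = lam * ∑' n, e n * z ^ n := by
    rw [hyp2F1, ← tsum_mul_left]
    refine tsum_congr fun n => ?_
    have hpp : 0 < poch (lam + 1) n := poch_pos_s8 (by linarith) n
    have hln : (0:ℝ) < lam + n := by positivity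
    have hfac : (0:ℝ) < n.factorial := by positivity
    have hshift := poch_shift lam n
    have hQval : poch (lam + 1) n = poch lam n * (lam + n) / lam :=
      (eq_div_iff hl0.ne').mpr (by linear_combination hshift)
    rw [he, hQval]
    have hP := poch_pos_s8 hl0 n
    field_simp
  rw [hG, hyp_eq]
  field_simp
end

section
/- For $0 < \lambda < 1$ and $0 \leq t < a < \rho$, the function $g(\rho,t) = \frac{2\sin(\lambda\pi)}{\pi}\cdot\frac{\rho}{\rho^2-t^2}\left(\frac{\rho^2-a^2}{a^2-t^2}\right)^{\lambda-1}$ satisfies, for every $\rho \in (a,b]$, the Abel-type integral equation $\int_a^\rho \frac{g(u,t)\,du}{(\rho^2-u^2)^\lambda} = \frac{1}{(\rho^2-t^2)^\lambda}$. -/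
open Real MeasureTheory Set intervalIntegral

lemma rbeta_eqon (p q : ℝ) :
    Set.EqOn (fun x : ℝ => ((x:ℂ) ^ ((p:ℂ)-1) * (1-(x:ℂ)) ^ ((q:ℂ)-1)).re)
      (fun x : ℝ => x ^ (p-1) * (1-x) ^ (q-1)) (Set.Icc 0 1) := by
  intro x hx
  have h1 : (0:ℝ) ≤ x := hx.1
  have h2 : (0:ℝ) ≤ 1 - x := by linarith [hx.2]
  have e1 : ((p:ℂ)-1) = (((p-1:ℝ)):ℂ) := by push_cast; ring
  have e2 : ((q:ℂ)-1) = (((q-1:ℝ)):ℂ) := by push_cast; ring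
  have e3 : (1-(x:ℂ)) = (((1-x:ℝ)):ℂ) := by push_cast; ring
  simp only [e1, e2, e3, ← Complex.ofReal_cpow h1, ← Complex.ofReal_cpow h2]
  rw [← Complex.ofReal_mul, Complex.ofReal_re]

lemma rbeta_int (p q : ℝ) (hp : 0 < p) (hq : 0 < q) :
    IntervalIntegrable (fun x : ℝ => x ^ (p-1) * (1-x) ^ (q-1)) volume 0 1 := by
  have h := Complex.betaIntegral_convergent (u := (p:ℂ)) (v := (q:ℂ)) (by simpa) (by simpa)
  rw [intervalIntegrable_iff] at h ⊢
  have h' : IntegrableOn (fun x : ℝ => ((x:ℂ) ^ ((p:ℂ)-1) * (1-(x:ℂ)) ^ ((q:ℂ)-1)).re) (Set.uIoc (0:ℝ) 1) volume :=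
    (Complex.reCLM : ℂ →L[ℝ] ℝ).integrable_comp h
  refine h'.congr_fun ?_ measurableSet_uIoc
  have : Set.uIoc (0:ℝ) 1 ⊆ Icc 0 1 := by
    rw [uIoc_of_le zero_le_one]; exact Ioc_subset_Icc_self
  intro x hx
  exact rbeta_eqon p q (this hx)

lemma rbeta_val (lam : ℝ) (hl0 : 0 < lam) (hl1 : lam < 1) :
    ∫ x in (0:ℝ)..1, x ^ (-lam) * (1-x) ^ (lam-1) = π / Real.sin (π * lam) := by
  have hp : (0:ℝ) < 1 - lam := by linarith
  have h := Complex.betaIntegral_convergent (u := ((1-lam:ℝ):ℂ)) (v := ((lam:ℝ):ℂ))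
    (by simpa) (by simpa)
  have hbeta : Complex.betaIntegral ((1-lam:ℝ):ℂ) ((lam:ℝ):ℂ)
      = Complex.Gamma ((1-lam:ℝ):ℂ) * Complex.Gamma ((lam:ℝ):ℂ) := by
    have := Complex.Gamma_mul_Gamma_eq_betaIntegral
      (s := ((1-lam:ℝ):ℂ)) (t := ((lam:ℝ):ℂ)) (by simpa) (by simpa)
    have hsum : ((1-lam:ℝ):ℂ) + ((lam:ℝ):ℂ) = 1 := by push_cast; ring
    rw [hsum, Complex.Gamma_one, one_mul] at this
    exact this.symm
  have key : ∫ x in (0:ℝ)..1, x ^ (-lam) * (1-x) ^ (lam-1)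
      = (Complex.betaIntegral ((1-lam:ℝ):ℂ) ((lam:ℝ):ℂ)).re := by
    have hcomm := (Complex.reCLM : ℂ →L[ℝ] ℝ).intervalIntegral_comp_comm h
    rw [Complex.betaIntegral]
    have hre : (∫ x in (0:ℝ)..1, (x:ℂ) ^ (((1-lam:ℝ):ℂ)-1) * (1-(x:ℂ)) ^ (((lam:ℝ):ℂ)-1)).re
        = ∫ x in (0:ℝ)..1, ((x:ℂ) ^ (((1-lam:ℝ):ℂ)-1) * (1-(x:ℂ)) ^ (((lam:ℝ):ℂ)-1)).re := by
      exact hcomm.symm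
    rw [hre]
    refine intervalIntegral.integral_congr ?_
    rw [uIcc_of_le zero_le_one]
    intro x hx
    have e := rbeta_eqon (1-lam) lam hx
    rw [show ((1:ℝ)-lam)-1 = -lam by ring] at e
    exact e.symm
  rw [key, hbeta, Complex.Gamma_ofReal, Complex.Gamma_ofReal, ← Complex.ofReal_mul,
    Complex.ofReal_re, mul_comm]
  exact Real.Gamma_mul_Gamma_one_sub lam

lemma shifted_int (lam a ρ : ℝ) (hl0 : 0 < lam) (hl1 : lam < 1) (h : a < ρ) :
    IntervalIntegrable (fun u : ℝ => (u - a) ^ (lam - 1) * (ρ - u) ^ (-lam)) volume a ρ := by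
  have hρa : (0:ℝ) < ρ - a := by linarith
  have hbase := rbeta_int lam (1 - lam) hl0 (by linarith)
  rw [show (1:ℝ) - lam - 1 = -lam by ring] at hbase
  have h1 := hbase.comp_mul_right (c := (ρ - a)⁻¹)
  have e0 : (0:ℝ) / (ρ-a)⁻¹ = 0 := by simp
  have e3 : (1:ℝ) / (ρ-a)⁻¹ = ρ - a := by field_simp
  rw [e0, e3] at h1
  have h2 := h1.comp_sub_right a
  rw [zero_add, sub_add_cancel] at h2
  have h3 := h2.const_mul ((ρ - a) ^ (lam - 1) * (ρ - a) ^ (-lam))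
  rw [intervalIntegrable_iff] at h3 ⊢
  refine h3.congr_fun ?_ measurableSet_uIoc
  intro u hu
  have hu' : u ∈ Set.Ioc a ρ := by rwa [Set.uIoc_of_le h.le] at hu
  have hw : (0:ℝ) ≤ u - a := by linarith [hu'.1]
  have hy : (0:ℝ) ≤ ρ - u := by linarith [hu'.2]
  have p1 := Real.rpow_pos_of_pos hρa (lam - 1)
  have p2 := Real.rpow_pos_of_pos hρa (-lam)
  simp only [← div_eq_mul_inv]
  rw [show 1 - (u - a)/(ρ - a) = (ρ - u)/(ρ - a) by field_simp; ring]
  rw [Real.div_rpow hw hρa.le, Real.div_rpow hy hρa.le]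
  field_simp

lemma alg_abstract (lam u A B S R w x y z : ℝ) (hA : 0 < A) (hB : 0 < B) (hS : 0 < S)
    (hR : 0 < R) (hw : 0 < w) (hx : 0 < x) (hy : 0 < y) (hz : 0 < z)
    (hrel : B * S - A * (y * z) = w * x * R) :
    (-2 * u * A * R) / (B * S ^ 2) *
        ((A * (y * z) / (B * S)) ^ (-lam) * (1 - A * (y * z) / (B * S)) ^ (lam - 1))
      = (-2 * u * R ^ lam * x ^ (lam - 1) * z ^ (-lam)) / (S * A ^ (lam - 1)) *
          (w ^ (lam - 1) * y ^ (-lam)) := by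
  have e1 : 1 - A * (y * z) / (B * S) = w * x * R / (B * S) := by
    field_simp
    linarith [hrel]
  have h1 : (A * (y * z) / (B * S)) ^ (-lam) = (A ^ lam * (y ^ lam * z ^ lam) / (B ^ lam * S ^ lam))⁻¹ := by
    rw [Real.rpow_neg (by positivity), Real.div_rpow (by positivity) (by positivity),
      Real.mul_rpow (by positivity) (by positivity), Real.mul_rpow (by positivity) (by positivity),
      Real.mul_rpow (by positivity) (by positivity)]
  have h2 : (w * x * R / (B * S)) ^ (lam - 1)
      = (w ^ lam * x ^ lam * R ^ lam / (B ^ lam * S ^ lam)) / (w * x * R / (B * S)) := by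
    rw [Real.rpow_sub (by positivity), Real.rpow_one, Real.div_rpow (by positivity) (by positivity),
      Real.mul_rpow (by positivity) (by positivity), Real.mul_rpow (by positivity) (by positivity),
      Real.mul_rpow (by positivity) (by positivity)]
  have h3 : x ^ (lam - 1) = x ^ lam / x := by rw [Real.rpow_sub hx, Real.rpow_one]
  have h4 : z ^ (-lam) = (z ^ lam)⁻¹ := Real.rpow_neg hz.le lam
  have h5 : A ^ (lam - 1) = A ^ lam / A := by rw [Real.rpow_sub hA, Real.rpow_one]
  have h6 : w ^ (lam - 1) = w ^ lam / w := by rw [Real.rpow_sub hw, Real.rpow_one]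
  have h7 : y ^ (-lam) = (y ^ lam)⁻¹ := Real.rpow_neg hy.le lam
  have pA := Real.rpow_pos_of_pos hA lam
  have pB := Real.rpow_pos_of_pos hB lam
  have pS := Real.rpow_pos_of_pos hS lam
  have pR := Real.rpow_pos_of_pos hR lam
  have pw := Real.rpow_pos_of_pos hw lam
  have px := Real.rpow_pos_of_pos hx lam
  have py := Real.rpow_pos_of_pos hy lam
  have pz := Real.rpow_pos_of_pos hz lam
  rw [e1, h1, h2, h3, h4, h5, h6, h7]
  field_simp

lemma alg_abstract2 (lam u A S R w x y z sp : ℝ) (hA : 0 < A) (hS : 0 < S)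
    (hR : 0 < R) (hw : 0 < w) (hx : 0 < x) (hy : 0 < y) (hz : 0 < z) :
    (2 * sp * (u / S) * ((w * x) / A) ^ (lam - 1)) / (y * z) ^ lam
      = (-(sp) * R ^ (-lam)) *
        ((-2 * u * R ^ lam * x ^ (lam - 1) * z ^ (-lam)) / (S * A ^ (lam - 1)) *
          (w ^ (lam - 1) * y ^ (-lam))) := by
  have h0 : ((w * x) / A) ^ (lam - 1) = (w ^ lam * x ^ lam / A ^ lam) / ((w * x) / A) := by
    rw [Real.rpow_sub (by positivity), Real.rpow_one, Real.div_rpow (by positivity) (by positivity),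
      Real.mul_rpow (by positivity) (by positivity)]
  have h1 : (y * z) ^ lam = y ^ lam * z ^ lam := Real.mul_rpow hy.le hz.le
  have h2 : R ^ (-lam) = (R ^ lam)⁻¹ := Real.rpow_neg hR.le lam
  have h3 : x ^ (lam - 1) = x ^ lam / x := by rw [Real.rpow_sub hx, Real.rpow_one]
  have h4 : z ^ (-lam) = (z ^ lam)⁻¹ := Real.rpow_neg hz.le lam
  have h5 : A ^ (lam - 1) = A ^ lam / A := by rw [Real.rpow_sub hA, Real.rpow_one]
  have h6 : w ^ (lam - 1) = w ^ lam / w := by rw [Real.rpow_sub hw, Real.rpow_one]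
  have h7 : y ^ (-lam) = (y ^ lam)⁻¹ := Real.rpow_neg hy.le lam
  have pA := Real.rpow_pos_of_pos hA lam
  have pS := Real.rpow_pos_of_pos hS lam
  have pR := Real.rpow_pos_of_pos hR lam
  have pw := Real.rpow_pos_of_pos hw lam
  have px := Real.rpow_pos_of_pos hx lam
  have py := Real.rpow_pos_of_pos hy lam
  have pz := Real.rpow_pos_of_pos hz lam
  rw [h0, h1, h2, h3, h4, h5, h6, h7]
  field_simp

set_option maxHeartbeats 2000000 in
theorem ring_abel_equation (lam a b t : ℝ) (hl0 : 0 < lam) (hl1 : lam < 1)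
    (ha : 0 < a) (hab : a < b) (ht0 : 0 ≤ t) (hta : t < a) :
    ∀ ρ : ℝ, a < ρ → ρ ≤ b →
      ∫ u in a..ρ,
          (2 * Real.sin (lam * π) / π * (u / (u ^ 2 - t ^ 2)) *
              ((u ^ 2 - a ^ 2) / (a ^ 2 - t ^ 2)) ^ (lam - 1)) /
            (ρ ^ 2 - u ^ 2) ^ lam
        = 1 / (ρ ^ 2 - t ^ 2) ^ lam := by
  intro ρ haρ hρb
  have hπ := Real.pi_pos
  have hsin : 0 < Real.sin (lam * π) :=
    Real.sin_pos_of_pos_of_lt_pi (by positivity) (by nlinarith)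
  have hA : 0 < a^2 - t^2 := by nlinarith
  have hB : 0 < ρ^2 - a^2 := by nlinarith
  have hR : 0 < ρ^2 - t^2 := by nlinarith
  set φ : ℝ → ℝ := fun u => (a^2-t^2) * (ρ^2-u^2) / ((ρ^2-a^2) * (u^2-t^2)) with hφdef
  set φd : ℝ → ℝ := fun u => (-2*u*(a^2-t^2)*(ρ^2-t^2)) / ((ρ^2-a^2) * (u^2-t^2)^2) with hφddef
  set g : ℝ → ℝ := fun y => y^(-lam) * (1-y)^(lam-1) with hgdef
  have hSpos : ∀ u ∈ Set.Icc a ρ, 0 < u^2 - t^2 := by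
    intro u hu
    have := hu.1
    nlinarith
  -- continuity of φ
  have hφcont : ContinuousOn φ (Set.uIcc a ρ) := by
    rw [Set.uIcc_of_le haρ.le, hφdef]
    apply ContinuousOn.div (by fun_prop) (by fun_prop)
    intro u hu
    exact (mul_pos hB (hSpos u hu)).ne'
  -- derivative
  have hφderiv : ∀ x ∈ Set.Ioo (min a ρ) (max a ρ), HasDerivWithinAt φ (φd x) (Set.Ioi x) x := by
    rw [min_eq_left haρ.le, max_eq_right haρ.le]
    intro x hx
    have hSx : 0 < x^2 - t^2 := hSpos x ⟨hx.1.le, hx.2.le⟩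
    have hx2 : HasDerivAt (fun u:ℝ => u^2) (2*x) x := by
      simpa using hasDerivAt_pow 2 x
    have hnum : HasDerivAt (fun u:ℝ => (a^2-t^2) * (ρ^2-u^2)) ((a^2-t^2) * (0 - 2*x)) x :=
      ((hasDerivAt_const x (ρ^2)).sub hx2).const_mul _
    have hden : HasDerivAt (fun u:ℝ => (ρ^2-a^2) * (u^2-t^2)) ((ρ^2-a^2) * (2*x)) x :=
      (hx2.sub_const (t^2)).const_mul _
    have hne : (ρ^2-a^2) * (x^2-t^2) ≠ 0 := (mul_pos hB hSx).ne'
    have hd : HasDerivAt φ (((a^2-t^2) * (0 - 2*x) * ((ρ^2-a^2) * (x^2-t^2)) -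
        (a^2-t^2) * (ρ^2-x^2) * ((ρ^2-a^2) * (2*x))) / ((ρ^2-a^2) * (x^2-t^2))^2) x := by
      rw [hφdef]
      exact hnum.div hden hne
    have heq : φd x = ((a^2-t^2) * (0 - 2*x) * ((ρ^2-a^2) * (x^2-t^2)) -
        (a^2-t^2) * (ρ^2-x^2) * ((ρ^2-a^2) * (2*x))) / ((ρ^2-a^2) * (x^2-t^2))^2 := by
      rw [hφddef]
      rw [div_eq_div_iff (by positivity) (by positivity)]
      ring
    rw [heq]
    exact hd.hasDerivWithinAt
  -- endpoint values
  have hφa : φ a = 1 := by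
    rw [hφdef]
    field_simp
  have hφρ : φ ρ = 0 := by
    rw [hφdef]
    simp
  -- image bounds
  have hmem : ∀ u ∈ Set.Icc a ρ, φ u ∈ Set.Icc 0 1 := by
    intro u hu
    have hS := hSpos u hu
    have hQ : (0:ℝ) ≤ ρ^2 - u^2 := by nlinarith [hu.1, hu.2]
    have hP : (0:ℝ) ≤ u^2 - a^2 := by nlinarith [hu.1]
    have hrel : (ρ^2-a^2) * (u^2-t^2) - (a^2-t^2)*(ρ^2-u^2) = (u^2-a^2)*(ρ^2-t^2) := by ring
    rw [hφdef]
    constructor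
    · positivity
    · rw [div_le_one (by positivity)]
      nlinarith [mul_nonneg hP hR.le]
  have hg1 : IntegrableOn g (φ '' Set.uIcc a ρ) volume := by
    have hibeta := rbeta_int (1-lam) lam (by linarith) hl0
    rw [show (1:ℝ)-lam-1 = -lam by ring] at hibeta
    have hIcc : IntegrableOn (fun x:ℝ => x^(-lam) * (1-x)^(lam-1)) (Set.Icc 0 1) volume :=
      (intervalIntegrable_iff_integrableOn_Icc_of_le zero_le_one).mp hibeta
    rw [hgdef]
    refine hIcc.mono_set ?_
    rw [Set.uIcc_of_le haρ.le]
    rintro y ⟨u, hu, rfl⟩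
    exact hmem u hu
  have hgcont : ContinuousOn g (φ '' Set.Ioo (min a ρ) (max a ρ)) := by
    rw [min_eq_left haρ.le, max_eq_right haρ.le]
    have hsub : φ '' Set.Ioo a ρ ⊆ Set.Ioo 0 1 := by
      rintro y ⟨u, hu, rfl⟩
      have hS : 0 < u^2-t^2 := hSpos u ⟨hu.1.le, hu.2.le⟩
      have hQ : 0 < ρ^2-u^2 := by nlinarith [hu.1, hu.2]
      have hP : 0 < u^2-a^2 := by nlinarith [hu.1]
      rw [hφdef]
      constructor
      · positivity
      · rw [div_lt_one (by positivity)]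
        nlinarith [mul_pos hP hR]
    refine ContinuousOn.mono ?_ hsub
    rw [hgdef]
    apply ContinuousOn.mul
    · exact ContinuousOn.rpow_const continuousOn_id (fun y hy => Or.inl (ne_of_gt hy.1))
    · refine ContinuousOn.rpow_const (continuousOn_const.sub continuousOn_id) ?_
      intro y hy
      exact Or.inl (sub_ne_zero_of_ne hy.2.ne')
  -- the auxiliary continuous factor
  set c : ℝ → ℝ := fun u =>
    (-2*u*(ρ^2-t^2)^lam*(u+a)^(lam-1)*(ρ+u)^(-lam)) / ((u^2-t^2) * (a^2-t^2)^(lam-1)) with hcdef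
  have hccont : ContinuousOn c (Set.uIcc a ρ) := by
    rw [Set.uIcc_of_le haρ.le, hcdef]
    apply ContinuousOn.div
    · apply ContinuousOn.mul
      · apply ContinuousOn.mul (by fun_prop)
        refine ContinuousOn.rpow_const (by fun_prop) ?_
        intro u hu
        exact Or.inl (by nlinarith [hu.1] : u + a ≠ 0)
      · refine ContinuousOn.rpow_const (by fun_prop) ?_
        intro u hu
        exact Or.inl (by nlinarith [hu.1, hu.2] : ρ + u ≠ 0)
    · fun_prop
    · intro u hu
      have hS := hSpos u hu
      have := Real.rpow_pos_of_pos hA (lam-1)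
      positivity
  -- the key pointwise identity on the interior
  have hkey : ∀ u, a < u → u < ρ →
      φd u • (g ∘ φ) u = c u * ((u-a)^(lam-1) * (ρ-u)^(-lam)) := by
    intro u h1 h2
    have hu0 : 0 < u := lt_trans ha h1
    have hS : 0 < u^2-t^2 := hSpos u ⟨h1.le, h2.le⟩
    have hrel : (ρ^2-a^2) * (u^2-t^2) - (a^2-t^2)*((ρ-u)*(ρ+u)) = (u-a)*(u+a)*(ρ^2-t^2) := by
      ring
    have halg := alg_abstract lam u (a^2-t^2) (ρ^2-a^2) (u^2-t^2) (ρ^2-t^2)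
      (u-a) (u+a) (ρ-u) (ρ+u) hA hB hS hR (by linarith) (by linarith) (by linarith)
      (by linarith) hrel
    simp only [hφddef, hφdef, hgdef, hcdef, Function.comp_apply, smul_eq_mul]
    rw [show ρ^2-u^2 = (ρ-u)*(ρ+u) by ring]
    exact halg
  -- hg2 : integrability of the substituted integrand
  have hg2 : IntegrableOn (fun u => φd u • (g ∘ φ) u) (Set.uIcc a ρ) volume := by
    rw [Set.uIcc_of_le haρ.le, integrableOn_Icc_iff_integrableOn_Ioc]
    have hh0 := shifted_int lam a ρ hl0 hl1 haρ
    have hprod := hh0.continuousOn_mul hccont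
    rw [intervalIntegrable_iff, Set.uIoc_of_le haρ.le] at hprod
    refine hprod.congr_fun ?_ measurableSet_Ioc
    intro u hu
    rcases eq_or_lt_of_le hu.2 with he | hlt
    · subst he
      have hz1 : (-lam) ≠ 0 := by simp [hl0.ne']
      simp only [hφddef, hφdef, hgdef, hcdef, Function.comp_apply, smul_eq_mul,
        show u - u = (0:ℝ) by ring, show u^2 - u^2 = (0:ℝ) by ring,
        Real.zero_rpow hz1, mul_zero, zero_div, zero_mul]
    · exact (hkey u hu.1 hlt).symm
  -- main substitution step
  have hsub : (∫ x in a..ρ, φd x • (g ∘ φ) x) = ∫ y in (φ a)..(φ ρ), g y :=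
    intervalIntegral.integral_comp_smul_deriv''' hφcont hφderiv hgcont hg1 hg2
  -- pointwise congruence of the original integrand
  have hEq : Set.EqOn
      (fun u => (2 * Real.sin (lam * π) / π * (u / (u ^ 2 - t ^ 2)) *
          ((u ^ 2 - a ^ 2) / (a ^ 2 - t ^ 2)) ^ (lam - 1)) / (ρ ^ 2 - u ^ 2) ^ lam)
      (fun u => (-(Real.sin (lam*π)/π) * (ρ^2-t^2)^(-lam)) • (φd u • (g ∘ φ) u))
      (Set.uIcc a ρ) := by
    rw [Set.uIcc_of_le haρ.le]
    intro u hu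
    have hz1 : (-lam) ≠ 0 := by simp [hl0.ne']
    have hz2 : lam - 1 ≠ 0 := by intro hc; linarith [sub_eq_zero.mp hc]
    rcases eq_or_lt_of_le hu.1 with he1 | h1
    · -- u = a
      subst he1
      simp only [hφddef, hφdef, hgdef, Function.comp_apply, smul_eq_mul,
        show a^2 - a^2 = (0:ℝ) by ring,
        show (a^2-t^2)*(ρ^2-a^2)/((ρ^2-a^2)*(a^2-t^2)) = (1:ℝ) from by
          rw [div_eq_one_iff_eq (mul_ne_zero hB.ne' hA.ne')]; ring,
        sub_self, zero_div, Real.zero_rpow hz2, mul_zero, zero_mul]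
    · rcases eq_or_lt_of_le hu.2 with he2 | h2
      · -- u = ρ
        subst he2
        simp only [hφddef, hφdef, hgdef, Function.comp_apply, smul_eq_mul,
          show u^2 - u^2 = (0:ℝ) by ring, Real.zero_rpow hl0.ne', Real.zero_rpow hz1,
          div_zero, mul_zero, zero_div, zero_mul]
      · -- interior
        have hu0 : 0 < u := lt_trans ha h1
        have hS : 0 < u^2-t^2 := hSpos u ⟨h1.le, h2.le⟩
        have halg2 := alg_abstract2 lam u (a^2-t^2) (u^2-t^2) (ρ^2-t^2)
          (u-a) (u+a) (ρ-u) (ρ+u) (Real.sin (lam*π)/π) hA hS hR (by linarith)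
          (by linarith) (by linarith) (by linarith)
        show (2 * Real.sin (lam * π) / π * (u / (u ^ 2 - t ^ 2)) *
            ((u ^ 2 - a ^ 2) / (a ^ 2 - t ^ 2)) ^ (lam - 1)) / (ρ ^ 2 - u ^ 2) ^ lam
            = (-(Real.sin (lam*π)/π) * (ρ^2-t^2)^(-lam)) • (φd u • (g ∘ φ) u)
        rw [smul_eq_mul, hkey u h1 h2]
        simp only [hcdef]
        rw [show u^2 - a^2 = (u-a)*(u+a) by ring,
            show ρ^2 - u^2 = (ρ-u)*(ρ+u) by ring,
            show 2 * Real.sin (lam * π) / π = 2 * (Real.sin (lam * π) / π) by ring]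
        exact halg2
  -- assemble
  rw [intervalIntegral.integral_congr hEq, intervalIntegral.integral_smul, hsub, hφa, hφρ,
    intervalIntegral.integral_symm]
  rw [hgdef]
  simp only
  rw [rbeta_val lam hl0 hl1]
  rw [smul_eq_mul, Real.rpow_neg hR.le, show π * lam = lam * π by ring]
  have hRl := Real.rpow_pos_of_pos hR lam
  field_simp
end
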